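/- arXiv:2604.07642 — 9 statements merged into one kernel-verified Lean document; each statement's English description precedes it below -/
import Mathlib

section
/- For integers n ≥ k ≥ 4 and 1 ≤ s ≤ ⌊k/2⌋ - 1, the graph W(n,k-1,s) := K_s ∨ ((n-k+s+1)·K_1 ∪ K_{k-2s-1}) is connected and contains no path on k vertices. -/
/-!
Outside `K_a`, only vertices of `K_c` are adjacent to each other, so the `K_a`-vertices of a path
in `W(a,b,c)` cut it into blocks, each a single isolated vertex or a run inside `K_c`. With `ℓ ≤ a`
vertices in `K_a` there are at most `ℓ + 1` blocks, so the path has at most `2ℓ + 1` vertices if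
it avoids `K_c` and at most `2ℓ + c` otherwise. For `a = s` and `c = k - 2s - 1` both are `< k`.
-/

open SimpleGraph

/-- Is the vertex in the third component (the clique `K_c`)? -/
def inClq {a b c : ℕ} : (Fin a ⊕ (Fin b ⊕ Fin c)) → Prop
  | Sum.inr (Sum.inr _) => True
  | _ => False

/-- The graph `W(a,b,c) = K_a ∨ (b·K_1 ∪ K_c)`: a clique on `a` vertices joined to
`b` isolated vertices together with a clique on `c` vertices. -/
def Wgraph (a b c : ℕ) : SimpleGraph (Fin a ⊕ (Fin b ⊕ Fin c)) where
  Adj x y := x ≠ y ∧ (x.isLeft ∨ y.isLeft ∨ (inClq x ∧ inClq y))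
  symm := by
    constructor
    rintro x y ⟨hne, h⟩
    exact ⟨hne.symm, by tauto⟩
  loopless := ⟨fun x h => h.1 rfl⟩

/-- `G` contains a path on `k` vertices. -/
def HasPathOn {V : Type*} (G : SimpleGraph V) (k : ℕ) : Prop :=
  ∃ (u v : V) (p : G.Walk u v), p.IsPath ∧ p.support.length = k

theorem List.Nodup.countP_le_card {α : Type*} [DecidableEq α] {p : α → Bool} {l : List α}
    (hl : l.Nodup) {s : Finset α} (hs : ∀ x ∈ l, p x → x ∈ s) : l.countP p ≤ s.card := by
  rw [List.countP_eq_length_filter, ← List.toFinset_card_of_nodup (hl.filter p)]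
  refine Finset.card_le_card fun x hx => ?_
  rw [List.mem_toFinset, List.mem_filter] at hx
  exact hs x hx.1 hx.2

namespace Wgraph

variable {a b c : ℕ}

open Sum

def isIsolated : Fin a ⊕ (Fin b ⊕ Fin c) → Bool
  | inr (inl _) => true
  | _ => false

def isInClique : Fin a ⊕ (Fin b ⊕ Fin c) → Bool
  | inr (inr _) => true
  | _ => false

theorem isUniversal_inl (i : Fin a) : (Wgraph a b c).IsUniversal (inl i) :=
  fun _ hx => ⟨hx, Or.inl rfl⟩

theorem connected (ha : 0 < a) : (Wgraph a b c).Connected :=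
  .of_isUniversal (isUniversal_inl ⟨0, ha⟩)

theorem countP_isLeft_le {l : List (Fin a ⊕ (Fin b ⊕ Fin c))} (hl : l.Nodup) :
    l.countP isLeft ≤ a := by
  simpa using hl.countP_le_card (s := Finset.univ.map .inl) (by rintro (x | x) _ h <;> simp_all)

theorem countP_isInClique_le {l : List (Fin a ⊕ (Fin b ⊕ Fin c))} (hl : l.Nodup) :
    l.countP isInClique ≤ c := by
  simpa using hl.countP_le_card (s := Finset.univ.map (.trans .inr .inr))
    (by rintro (x | x | x) _ h <;> simp_all [isInClique])

theorem length_eq_countP (l : List (Fin a ⊕ (Fin b ⊕ Fin c))) :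
    l.length = l.countP isLeft + l.countP isIsolated + l.countP isInClique := by
  induction l with
  | nil => rfl
  | cons x t ih =>
    rcases x with _ | _ | _ <;> simp [isIsolated, isInClique, List.countP_cons, ih] <;> omega

/-- Every isolated vertex, and the last vertex of `K_c`, on a chain is followed by a vertex of
`K_a` unless it ends the chain; the `head?` term is what makes the induction go through. -/
theorem countP_isIsolated_add_le_of_isChain {l : List (Fin a ⊕ (Fin b ⊕ Fin c))}
    (h : l.IsChain (Wgraph a b c).Adj) :
    l.countP isIsolated + (l.any isInClique).toNat + (l.head?.any isLeft).toNat ≤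
      l.countP isLeft + 1 := by
  induction l with
  | nil => simp
  | cons x t ih =>
    specialize ih h.tail
    cases t with
    | nil => rcases x with _ | _ | _ <;> simp [isIsolated, isInClique]
    | cons y t =>
      have hxy := (List.isChain_cons_cons.mp h).1
      rcases x with _ | _ | _ <;> rcases y with _ | _ | _ <;>
        simp_all [isIsolated, isInClique, Wgraph, inClq, List.countP_cons] <;> omega

theorem length_support_le {u v} {p : (Wgraph a b c).Walk u v} (hp : p.IsPath) :
    p.support.length ≤ 2 * a + max c 1 := by
  have hcount := countP_isIsolated_add_le_of_isChain p.isChain_adj_support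
  have hL := countP_isLeft_le (b := b) (c := c) hp.support_nodup
  have hC := countP_isInClique_le (b := b) hp.support_nodup
  have hhead : (p.support.head?.any isLeft).toNat ≤ 1 := Bool.toNat_le _
  rw [length_eq_countP]
  cases hany : p.support.any isInClique <;>
    simp only [hany, Bool.toNat_false, Bool.toNat_true] at hcount
  · have : p.support.countP isInClique = 0 := by simpa [List.countP_eq_zero] using hany
    omega
  · omega

theorem not_hasPathOn {k : ℕ} (hk : 2 * a + max c 1 < k) : ¬ HasPathOn (Wgraph a b c) k := by
  rintro ⟨_, _, p, hp, hlen⟩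
  have := length_support_le hp
  omega

end Wgraph

theorem Wgraph_connected_pathFree_general (n k s : ℕ)
    (hs1 : 1 ≤ s) (hs2 : s ≤ k / 2 - 1) :
    (Wgraph s (n - k + s + 1) (k - 2 * s - 1)).Connected ∧
    ¬ HasPathOn (Wgraph s (n - k + s + 1) (k - 2 * s - 1)) k :=
  ⟨Wgraph.connected hs1, Wgraph.not_hasPathOn (by omega)⟩

/-- For `n ≥ k ≥ 4` and `1 ≤ s ≤ ⌊k/2⌋ - 1`, the graph
`W(n,k-1,s) = K_s ∨ ((n-k+s+1)·K_1 ∪ K_{k-2s-1})` is connected and has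
no path on `k` vertices. -/
theorem Wgraph_connected_pathFree (n k s : ℕ) (hnk : n ≥ k) (hk : k ≥ 4)
    (hs1 : 1 ≤ s) (hs2 : s ≤ k / 2 - 1) :
    (Wgraph s (n - k + s + 1) (k - 2 * s - 1)).Connected ∧
    ¬ HasPathOn (Wgraph s (n - k + s + 1) (k - 2 * s - 1)) k :=
  Wgraph_connected_pathFree_general n k s hs1 hs2
end

section
/- Let G be a connected graph with at least t+2 vertices and minimum degree at least t. Then for every vertex v of G, either there is a path on at least t+2 vertices starting at v, or v is a cut vertex of G lying in a block of G that is a clique on t+1 vertices. -/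
/-!
Take a longest path `P` from `v`, ending at `w`. Every neighbour of `w` lies on `P`, so if `P` has
fewer than `t + 2` vertices then it has exactly `t + 1` and `w` is adjacent to all of them. A Pósa
rotation turns every vertex `u ≠ v` of `P` into the end of a longest path from `v` on the same
vertex set, so the vertices of `P` form a clique on `t + 1` vertices, none of which except `v` has
a neighbour off `P`. As `G` has a vertex off `P`, removing `v` separates it from `w`, and the same
separation shows that no `2`-connected set strictly contains `P`.
-/

open SimpleGraph

/-- `v` is a cut vertex of `G`: removing it disconnects the rest of the graph. -/
def IsCutVertex {V : Type*} (G : SimpleGraph V) (v : V) : Prop :=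
  ¬ (G.induce ({v}ᶜ : Set V)).Preconnected

/-- The set `B` induces a block of `G`: a maximal connected induced subgraph with
no cut vertex of itself. -/
def IsBlock {V : Type*} (G : SimpleGraph V) (B : Set V) : Prop :=
  B.Nonempty ∧ (G.induce B).Connected ∧
    (∀ v ∈ B, (G.induce (B \ {v})).Preconnected) ∧
    ∀ C : Set V, B ⊆ C → C.Nonempty → (G.induce C).Connected →
      (∀ v ∈ C, (G.induce (C \ {v})).Preconnected) → C ⊆ B

namespace SimpleGraph

variable {V : Type*} {G : SimpleGraph V} {u v w : V}

namespace Walk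

def IsLongestPath (p : G.Walk u v) : Prop :=
  p.IsPath ∧ ∀ ⦃x : V⦄ (q : G.Walk u x), q.IsPath → q.length ≤ p.length

theorem exists_isLongestPath [Finite V] (G : SimpleGraph V) (u : V) :
    ∃ (v : V) (p : G.Walk u v), p.IsLongestPath := by
  classical
  have := Fintype.ofFinite V
  have : Nonempty (Σ v, G.Path u v) := ⟨⟨u, Path.nil⟩⟩
  obtain ⟨⟨v, p, hp⟩, hmax⟩ := Finite.exists_max fun q : Σ v, G.Path u v => q.2.1.length
  exact ⟨v, p, hp, fun x q hq => hmax ⟨x, q, hq⟩⟩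

theorem IsLongestPath.mem_support_of_adj {p : G.Walk u v} (hp : p.IsLongestPath)
    (h : G.Adj v w) : w ∈ p.support := by
  by_contra hw
  have := hp.2 _ (hp.1.concat hw h)
  rw [length_concat] at this
  omega

theorem IsLongestPath.of_support_perm {p : G.Walk u v} {q : G.Walk u w} (hp : p.IsLongestPath)
    (hq : q.IsPath) (hperm : q.support.Perm p.support) : q.IsLongestPath := by
  have hlen : q.length = p.length := by
    simpa only [length_support, add_left_inj] using hperm.length_eq
  exact ⟨hq, fun x r hr => hlen ▸ hp.2 r hr⟩

variable [DecidableEq V]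

theorem IsPath.exists_isPath_support_perm {p : G.Walk v w} (hp : p.IsPath)
    (hw : ∀ x ∈ p.support, x ≠ w → G.Adj x w) (hu : u ∈ p.support) (huv : u ≠ v) :
    ∃ q : G.Walk v u, q.IsPath ∧ q.support.Perm p.support := by
  set q₁ := p.takeUntil u hu
  set q₂ := p.dropUntil u hu
  have hq₁ : ¬ q₁.Nil := not_nil_of_ne huv.symm
  have hsupp : p.support = q₁.dropLast.support ++ q₂.support := by
    rw [← p.take_spec hu, support_append_eq_support_dropLast_append, support_dropLast hq₁]
  have hxw : q₁.penultimate ≠ w := by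
    have hdisj := List.disjoint_of_nodup_append (hsupp ▸ hp.support_nodup)
    exact fun h => hdisj (h ▸ q₁.dropLast.end_mem_support) q₂.end_mem_support
  have hx : q₁.penultimate ∈ p.support :=
    hsupp ▸ List.mem_append_left _ q₁.dropLast.end_mem_support
  have hperm : (q₁.dropLast.append (cons (hw _ hx hxw) q₂.reverse)).support.Perm p.support := by
    rw [hsupp, support_append, support_cons, List.tail_cons, support_reverse]
    exact (List.reverse_perm _).append_left _
  exact ⟨_, (isPath_def _).mpr (hperm.nodup_iff.mpr hp.support_nodup), hperm⟩

theorem IsPath.card_support_toFinset_erase {p : G.Walk u v} (hp : p.IsPath) :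
    (p.support.toFinset.erase v).card = p.length := by
  rw [Finset.card_erase_of_mem (List.mem_toFinset.mpr p.end_mem_support),
    List.toFinset_card_of_nodup hp.support_nodup, length_support, Nat.add_sub_cancel]

section

variable [Fintype (G.neighborSet v)]

theorem IsLongestPath.neighborFinset_subset {p : G.Walk u v} (hp : p.IsLongestPath) :
    G.neighborFinset v ⊆ p.support.toFinset.erase v := fun x hx => by
  rw [mem_neighborFinset] at hx
  exact Finset.mem_erase.mpr ⟨hx.ne', List.mem_toFinset.mpr (hp.mem_support_of_adj hx)⟩

theorem IsLongestPath.degree_le {p : G.Walk u v} (hp : p.IsLongestPath) :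
    G.degree v ≤ p.length :=
  hp.1.card_support_toFinset_erase ▸ Finset.card_le_card hp.neighborFinset_subset

theorem IsLongestPath.neighborFinset_eq {p : G.Walk u v} (hp : p.IsLongestPath)
    (hdeg : p.length ≤ G.degree v) : G.neighborFinset v = p.support.toFinset.erase v :=
  Finset.eq_of_subset_of_card_le hp.neighborFinset_subset
    (hp.1.card_support_toFinset_erase ▸ hdeg)

end

theorem IsLongestPath.neighborFinset_eq_of_mem_support [G.LocallyFinite]
    {p : G.Walk u v} (hp : p.IsLongestPath) (hdeg : ∀ a, p.length ≤ G.degree a)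
    (ha : w ∈ p.support) (hwu : w ≠ u) : G.neighborFinset w = p.support.toFinset.erase w := by
  have hv : ∀ x ∈ p.support, x ≠ v → G.Adj x v := fun x hx hxv => by
    rw [adj_comm, ← mem_neighborFinset, hp.neighborFinset_eq (hdeg v)]
    exact Finset.mem_erase.mpr ⟨hxv, List.mem_toFinset.mpr hx⟩
  obtain ⟨q, hq, hperm⟩ := hp.1.exists_isPath_support_perm hv ha hwu
  have hq' := hp.of_support_perm hq hperm
  rw [hq'.neighborFinset_eq ((hp.2 q hq).trans (hdeg w)), List.toFinset_eq_of_perm _ _ hperm]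

theorem IsLongestPath.adj_of_mem_support [G.LocallyFinite] {p : G.Walk u v}
    (hp : p.IsLongestPath) (hdeg : ∀ a, p.length ≤ G.degree a) {a b : V}
    (ha : a ∈ p.support) (hb : b ∈ p.support) (hab : a ≠ b) (hau : a ≠ u) : G.Adj a b := by
  rw [← mem_neighborFinset, hp.neighborFinset_eq_of_mem_support hdeg ha hau]
  exact Finset.mem_erase.mpr ⟨hab.symm, List.mem_toFinset.mpr hb⟩

theorem IsLongestPath.isClique_support [G.LocallyFinite] {p : G.Walk u v}
    (hp : p.IsLongestPath) (hdeg : ∀ a, p.length ≤ G.degree a) :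
    G.IsClique (p.support.toFinset : Set V) := by
  intro a ha b hb hab
  rw [Finset.mem_coe, List.mem_toFinset] at ha hb
  rcases eq_or_ne a u with rfl | hau
  · exact (hp.adj_of_mem_support hdeg hb ha hab.symm hab.symm).symm
  · exact hp.adj_of_mem_support hdeg ha hb hab hau

theorem IsLongestPath.mem_support_of_adj_of_ne_start [G.LocallyFinite] {p : G.Walk u v}
    (hp : p.IsLongestPath) (hdeg : ∀ a, p.length ≤ G.degree a) {a b : V}
    (ha : a ∈ p.support) (hau : a ≠ u) (hab : G.Adj a b) : b ∈ p.support := by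
  rw [← mem_neighborFinset, hp.neighborFinset_eq_of_mem_support hdeg ha hau] at hab
  exact List.mem_toFinset.mp (Finset.mem_of_mem_erase hab)

end Walk

section

variable {S T : Set V}

theorem IsClique.induce_preconnected (h : G.IsClique S) : (G.induce S).Preconnected := by
  rw [induce_eq_top.mpr h]
  exact preconnected_top

theorem mem_of_induce_reachable (hvT : v ∉ T) (hS : ∀ a ∈ S, a ≠ v → ∀ b, G.Adj a b → b ∈ S)
    {a b : T} (hab : (G.induce T).Reachable a b) (ha : (a : V) ∈ S) : (b : V) ∈ S := by
  obtain ⟨r⟩ := hab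
  induction r with
  | nil => exact ha
  | cons h _ ih => exact ih (hS _ ha (fun he => hvT (he ▸ Subtype.prop _)) _ h)

variable (hS : ∀ a ∈ S, a ≠ v → ∀ b, G.Adj a b → b ∈ S) (hvS : v ∈ S) (hwS : w ∈ S) (hwv : w ≠ v)
include hS hvS hwS hwv

theorem isCutVertex_of_forall_adj_mem {y : V} (hy : y ∉ S) : IsCutVertex G v := fun hpre =>
  hy (mem_of_induce_reachable (T := {v}ᶜ) (fun h => h rfl) hS
    (hpre ⟨w, hwv⟩ ⟨y, fun h => hy (h ▸ hvS)⟩) hwS)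

theorem isBlock_of_isClique_of_forall_adj_mem (hc : G.IsClique S) : IsBlock G S := by
  refine ⟨⟨v, hvS⟩, (connected_iff _).mpr ⟨hc.induce_preconnected, ⟨⟨v, hvS⟩⟩⟩,
    fun x _ => (hc.subset Set.sdiff_subset).induce_preconnected, fun C hSC _ _ hC x hx => ?_⟩
  by_contra hxS
  exact hxS (mem_of_induce_reachable (T := C \ {v}) (fun h => h.2 rfl) hS
    (hC v (hSC hvS) ⟨w, hSC hwS, hwv⟩ ⟨x, hx, fun h => hxS (h ▸ hvS)⟩) hwS)

end

end SimpleGraph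

theorem path_from_vertex_of_minDegree_general {V : Type*} [Fintype V]
    (G : SimpleGraph V) [DecidableRel G.Adj] (t : ℕ)
    (hconn : G.Connected) (hcard : t + 2 ≤ Fintype.card V)
    (hdeg : ∀ v : V, t ≤ G.degree v) (v : V) :
    (∃ (w : V) (p : G.Walk v w), p.IsPath ∧ t + 2 ≤ p.support.length) ∨
    (IsCutVertex G v ∧ ∃ B : Set V, IsBlock G B ∧ v ∈ B ∧ G.IsClique B ∧
      B.ncard = t + 1) := by
  classical
  obtain ⟨w, p, hp⟩ := Walk.exists_isLongestPath G v
  by_cases hlong : t + 1 ≤ p.length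
  · exact Or.inl ⟨w, p, hp.1, by rw [Walk.length_support]; omega⟩
  have hlen : p.length = t := le_antisymm (by omega) ((hdeg w).trans hp.degree_le)
  have hdeg_len : ∀ a, p.length ≤ G.degree a := hlen ▸ hdeg
  set S : Set V := ↑p.support.toFinset
  have hS : S.ncard = t + 1 := by
    rw [Set.ncard_coe_finset, List.toFinset_card_of_nodup hp.1.support_nodup,
      Walk.length_support, hlen]
  have hclosed : ∀ a ∈ S, a ≠ v → ∀ b, G.Adj a b → b ∈ S := fun a ha hav b hab => by
    simp only [S, Finset.mem_coe, List.mem_toFinset] at ha ⊢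
    exact hp.mem_support_of_adj_of_ne_start hdeg_len ha hav hab
  have hvS : v ∈ S := List.mem_toFinset.mpr p.start_mem_support
  have hwS : w ∈ S := List.mem_toFinset.mpr p.end_mem_support
  have hwv : w ≠ v := by
    rintro rfl
    have : Nontrivial V := Fintype.one_lt_card_iff_nontrivial.mp (by omega)
    have hnil : p.length = 0 := Walk.length_eq_zero_iff.mpr (Walk.isPath_iff_nil.mp hp.1)
    have := hconn.preconnected.degree_pos_of_nontrivial w
    have := hp.degree_le
    omega
  obtain ⟨y, hy⟩ : ∃ y, y ∉ S := (Set.ne_univ_iff_exists_notMem S).mp fun h => by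
    rw [Set.eq_univ_iff_ncard, hS, Nat.card_eq_fintype_card] at h
    omega
  exact Or.inr ⟨isCutVertex_of_forall_adj_mem hclosed hvS hwS hwv hy, S,
    isBlock_of_isClique_of_forall_adj_mem hclosed hvS hwS hwv (hp.isClique_support hdeg_len),
    hvS, hp.isClique_support hdeg_len, hS⟩

/-- If `G` is connected with at least `t+2` vertices and minimum degree at least `t`,
then every vertex `v` starts a path on at least `t+2` vertices, unless `v` is a cut
vertex of `G` lying in a block which is a clique on `t+1` vertices. -/
theorem path_from_vertex_of_minDegree {V : Type*} [Fintype V] [DecidableEq V]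
    (G : SimpleGraph V) [DecidableRel G.Adj] (t : ℕ)
    (hconn : G.Connected) (hcard : t + 2 ≤ Fintype.card V)
    (hdeg : ∀ v : V, t ≤ G.degree v) (v : V) :
    (∃ (w : V) (p : G.Walk v w), p.IsPath ∧ t + 2 ≤ p.support.length) ∨
    (IsCutVertex G v ∧ ∃ B : Set V, IsBlock G B ∧ v ∈ B ∧ G.IsClique B ∧
      B.ncard = t + 1) :=
  path_from_vertex_of_minDegree_general G t hconn hcard hdeg v
end

section
/- Let H be a 2-connected r-uniform hypergraph with n ≥ r ≥ 3, and let u, v be two distinct vertices. Then there exists a Berge cycle in H containing both u and v as defining vertices. -/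
open Finset

/-- A hypergraph (edge set `E`) is connected. -/
def HConnected {V : Type*} (E : Finset (Finset V)) : Prop :=
  ¬ ∃ A : Set V, A.Nonempty ∧ Aᶜ.Nonempty ∧ ∀ e ∈ E, (↑e ⊆ A ∨ ↑e ⊆ Aᶜ)

/-- `v` is a cut vertex of the hypergraph `E`: there is a partition
`V = {v} ∪ V₁ ∪ V₂` with `V₁, V₂` nonempty such that every hyperedge is contained
in `{v} ∪ V₁` or in `{v} ∪ V₂`. -/
def HCutVertex {V : Type*} (E : Finset (Finset V)) (v : V) : Prop :=
  ∃ V₁ V₂ : Set V, V₁.Nonempty ∧ V₂.Nonempty ∧ Disjoint V₁ V₂ ∧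
    v ∉ V₁ ∧ v ∉ V₂ ∧ (∀ x : V, x = v ∨ x ∈ V₁ ∨ x ∈ V₂) ∧
    ∀ e ∈ E, (↑e ⊆ insert v V₁ ∨ ↑e ⊆ insert v V₂)

/-- `e` is a cut hyperedge of `E`: there is a partition `V = V₁ ∪ V₂` with
`V₁, V₂` nonempty such that every hyperedge other than `e` is contained in `V₁`
or in `V₂`. -/
def HCutEdge {V : Type*} (E : Finset (Finset V)) (e : Finset V) : Prop :=
  e ∈ E ∧ ∃ V₁ V₂ : Set V, V₁.Nonempty ∧ V₂.Nonempty ∧ Disjoint V₁ V₂ ∧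
    (∀ x : V, x ∈ V₁ ∨ x ∈ V₂) ∧
    ∀ f ∈ E, f ≠ e → (↑f ⊆ V₁ ∨ ↑f ⊆ V₂)

/-- A hypergraph is 2-connected: connected, with no cut vertex and no cut hyperedge. -/
def HTwoConnected {V : Type*} (E : Finset (Finset V)) : Prop :=
  HConnected E ∧ (∀ v : V, ¬ HCutVertex E v) ∧ ∀ e : Finset V, ¬ HCutEdge E e

/-- There is a Berge cycle in `E` containing both `u` and `v` as defining vertices:
distinct vertices `w_1, …, w_m` and distinct hyperedges `e_1, …, e_m` (`m ≥ 2`)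
with `{w_i, w_{i+1}} ⊆ e_i` (indices mod `m`), and `u, v` among the `w_i`. -/
def HasBergeCycleThrough {V : Type*} (E : Finset (Finset V)) (u v : V) : Prop :=
  ∃ (m : ℕ) (w : Fin (m + 2) → V) (e : Fin (m + 2) → Finset V),
    Function.Injective w ∧ Function.Injective e ∧
    (∃ i, w i = u) ∧ (∃ j, w j = v) ∧
    ∀ i : Fin (m + 2), e i ∈ E ∧ w i ∈ e i ∧ w (i + 1) ∈ e i

/-!
Pass to the bipartite incidence graph of `E`: a cycle through a vertex-node of it, read off at
its vertex-nodes and hyperedge-nodes alternately, is a Berge cycle. Since hyperedges have at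
least two vertices, if deleting a node or a vertex-hyperedge incidence disconnected the
incidence graph, its reachability classes would give a cut vertex or a cut hyperedge of `E`;
so the incidence graph has no cut vertex and no bridge. In such a graph any two vertices
`u ≠ v` lie on a common cycle, by induction along a walk `v, w, …, u`: take a cycle through `w`
and `u`; if it misses `v`, a path from `v` to the cycle avoiding `w`, the edge `vw`, and the arc
of the cycle from `w` to the first point hit that passes through `u` together form the
required cycle.
-/

namespace SimpleGraph

variable {W : Type*} {G : SimpleGraph W}

lemma Reachable.exists_walk_notMem_support_of_deleteIncidenceSet {w a b : W}
    (h : (G.deleteIncidenceSet w).Reachable a b) (ha : a ≠ w) :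
    ∃ p : G.Walk a b, w ∉ p.support := by
  obtain ⟨p⟩ := h
  refine ⟨p.mapLe (G.deleteIncidenceSet_le w), ?_⟩
  rw [Walk.support_mapLe_eq_support]
  induction p with
  | nil => simpa using ha.symm
  | cons hadj p ih =>
    rw [Walk.support_cons, List.mem_cons, not_or]
    exact ⟨ha.symm, ih (deleteIncidenceSet_adj.mp hadj).2.2⟩

namespace Walk

lemma exists_isPath_first_mem {a b : W} (p : G.Walk a b) {S : Set W} (hb : b ∈ S) :
    ∃ x ∈ S, ∃ q : G.Walk a x, q.IsPath ∧ (∀ y ∈ q.support, y ∈ S → y = x) ∧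
      q.support ⊆ p.support := by
  classical
  induction p with
  | nil => exact ⟨_, hb, nil, .nil, by simp, fun _ h => h⟩
  | @cons a c b h p ih =>
    by_cases ha : a ∈ S
    · exact ⟨a, ha, nil, .nil, by simp, by simp⟩
    obtain ⟨x, hx, q, -, hqS, hqp⟩ := ih hb
    refine ⟨x, hx, (cons h q).bypass, bypass_isPath _, fun y hy hyS => ?_,
      List.Subset.trans (support_bypass_subset_support _)
        (by simpa using List.cons_subset_cons a hqp)⟩
    rcases List.mem_cons.mp (support_bypass_subset_support _ hy) with rfl | hy
    · exact absurd hyS ha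
    · exact hqS y hy hyS

lemma IsPath.append {a b c : W} {p : G.Walk a b} {q : G.Walk b c} (hp : p.IsPath)
    (hq : q.IsPath) (hpq : ∀ y ∈ p.support, y ∈ q.support → y = b) :
    (p.append q).IsPath := by
  have hq' := hq.support_nodup
  rw [← cons_tail_support q, List.nodup_cons] at hq'
  rw [isPath_def, support_append, List.nodup_append]
  refine ⟨hp.support_nodup, hq'.2, ?_⟩
  rintro y hyp _ hyq rfl
  obtain rfl := hpq y hyp (List.mem_of_mem_tail hyq)
  exact hq'.1 hyq

lemma IsCycle.exists_isPath_mem_support {w x u : W} {c : G.Walk w w} (hc : c.IsCycle)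
    (hx : x ∈ c.support) (hxw : x ≠ w) (hu : u ∈ c.support) :
    ∃ p : G.Walk w x, p.IsPath ∧ u ∈ p.support ∧ p.support ⊆ c.support := by
  classical
  rw [← c.take_spec hx, mem_support_append_iff] at hu
  rcases hu with hu | hu
  · exact ⟨c.takeUntil x hx, hc.isPath_takeUntil hx, hu, c.support_takeUntil_subset_support hx⟩
  · have hc' := hc
    rw [← c.take_spec hx] at hc'
    refine ⟨(c.dropUntil x hx).reverse,
      (hc'.isPath_of_append_right (not_nil_of_ne hxw.symm)).reverse, by simpa using hu, ?_⟩
    simpa using c.support_dropUntil_subset_support hx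

end Walk

open Walk

lemma exists_isCycle_mem_support_of_not_isBridge {u v : W} (h : G.Adj v u)
    (hb : ¬ G.IsBridge s(v, u)) : ∃ c : G.Walk v v, c.IsCycle ∧ u ∈ c.support := by
  classical
  rw [isBridge_iff, not_not] at hb
  obtain ⟨z, c, hc, he⟩ := adj_and_reachable_delete_edges_iff_exists_cycle.mp ⟨h, hb⟩
  have hv := c.fst_mem_support_of_mem_edges he
  exact ⟨c.rotate v hv, hc.rotate hv, by simpa using c.snd_mem_support_of_mem_edges he⟩

lemma exists_isCycle_of_adj_of_isCycle {u v w : W}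
    (hcut : (G.deleteIncidenceSet w).Reachable v u) (hvw : G.Adj v w) {c : G.Walk w w}
    (hc : c.IsCycle) (huc : u ∈ c.support) (hvc : v ∉ c.support) :
    ∃ c' : G.Walk v v, c'.IsCycle ∧ u ∈ c'.support := by
  obtain ⟨r, hwr⟩ := hcut.exists_walk_notMem_support_of_deleteIncidenceSet hvw.ne
  obtain ⟨x, hxc, q, hq, hqc, hqr⟩ := r.exists_isPath_first_mem (S := {y | y ∈ c.support}) huc
  have hwq : w ∉ q.support := fun h => hwr (hqr h)
  have hxw : x ≠ w := by
    rintro rfl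
    exact hwq q.end_mem_support
  obtain ⟨p, hp, hup, hpc⟩ := hc.exists_isPath_mem_support hxc hxw huc
  have hpath : (p.append q.reverse).IsPath :=
    hp.append hq.reverse fun y hyp hyq => hqc y (by simpa using hyq) (hpc hyp)
  refine ⟨cons hvw (p.append q.reverse), (cons_isCycle_iff _ hvw).mpr ⟨hpath, fun he => ?_⟩,
    by simp [hup]⟩
  rcases List.mem_append.mp (edges_append p q.reverse ▸ he) with he | he
  · exact hvc (hpc (p.fst_mem_support_of_mem_edges he))
  · exact hwq (by simpa using q.reverse.snd_mem_support_of_mem_edges he)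

theorem exists_isCycle_mem_support_of_reachable
    (hcut : ∀ w a b, a ≠ w → b ≠ w → (G.deleteIncidenceSet w).Reachable a b)
    (hbridge : ∀ ⦃a b⦄, G.Adj a b → ¬ G.IsBridge s(a, b)) {u v : W} (huv : u ≠ v)
    (h : G.Reachable v u) : ∃ c : G.Walk v v, c.IsCycle ∧ u ∈ c.support := by
  classical
  obtain ⟨p⟩ := h
  induction p with
  | nil => exact absurd rfl huv
  | @cons v w u hvw q ih =>
    by_cases hwu : w = u
    · subst hwu
      exact exists_isCycle_mem_support_of_not_isBridge hvw (hbridge hvw)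
    obtain ⟨c, hc, huc⟩ := ih (Ne.symm hwu)
    by_cases hvc : v ∈ c.support
    · exact ⟨c.rotate v hvc, hc.rotate hvc, by simpa using huc⟩
    · exact exists_isCycle_of_adj_of_isCycle (hcut w v u hvw.ne (Ne.symm hwu)) hvw hc huc hvc

end SimpleGraph

open SimpleGraph

section IncidenceGraph

variable {V : Type*} {E : Finset (Finset V)}

def incidenceGraph (E : Finset (Finset V)) : SimpleGraph (V ⊕ E) where
  Adj
    | .inl x, .inr f => x ∈ f.1
    | .inr f, .inl x => x ∈ f.1
    | _, _ => False
  symm := ⟨by rintro (x | f) (y | g) h <;> exact h⟩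
  loopless := ⟨by rintro (x | f) h <;> exact h⟩

@[simp]
lemma incidenceGraph_adj_inl_inr {x : V} {f : E} :
    (incidenceGraph E).Adj (.inl x) (.inr f) ↔ x ∈ f.1 := Iff.rfl

@[simp]
lemma incidenceGraph_adj_inr_inl {x : V} {f : E} :
    (incidenceGraph E).Adj (.inr f) (.inl x) ↔ x ∈ f.1 := Iff.rfl

lemma incidenceGraph_isLeft_getVert_iff {x : V} {t : V ⊕ E}
    (p : (incidenceGraph E).Walk (.inl x) t) ⦃i : ℕ⦄ (hi : i ≤ p.length) :
    (p.getVert i).isLeft ↔ Even i := by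
  let c : (incidenceGraph E).Coloring Bool :=
    Coloring.mk Sum.isLeft (by rintro (y | f) (z | g) h <;> simp_all [incidenceGraph])
  have := c.even_length_iff_congr (p.take i)
  rw [Walk.take_length, min_eq_left hi] at this
  simpa [c, Coloring.mk] using this.symm

lemma subset_or_subset_compl_of_forall_adj {ι : Type*} {H : SimpleGraph (V ⊕ ι)} (a : V ⊕ ι)
    {f : ι} {s : Set V} (hs : ∀ y ∈ s, H.Adj (.inl y) (.inr f)) :
    s ⊆ {y | H.Reachable a (.inl y)} ∨ s ⊆ {y | H.Reachable a (.inl y)}ᶜ := by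
  by_cases hf : H.Reachable a (.inr f)
  · exact .inl fun y hy => hf.trans (hs y hy).symm.reachable
  · exact .inr fun y hy hy' => hf (hy'.trans (hs y hy).reachable)

lemma HConnected.reachable_incidenceGraph (h : HConnected E) (x y : V) :
    (incidenceGraph E).Reachable (.inl x) (.inl y) := by
  by_contra hxy
  exact h ⟨{z | (incidenceGraph E).Reachable (.inl x) (.inl z)}, ⟨x, .rfl⟩, ⟨y, hxy⟩,
    fun e he => subset_or_subset_compl_of_forall_adj (H := incidenceGraph E) (f := ⟨e, he⟩) _
      fun _ hz => hz⟩

lemma exists_reachable_inl_deleteIncidenceSet (hE : ∀ e ∈ E, 2 ≤ e.card) {w a : V ⊕ E}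
    (ha : a ≠ w) :
    ∃ y, .inl y ≠ w ∧ ((incidenceGraph E).deleteIncidenceSet w).Reachable a (.inl y) := by
  obtain x | f := a
  · exact ⟨x, ha, .rfl⟩
  obtain ⟨y, hyf, hyw⟩ : ∃ y ∈ f.1, .inl y ≠ w := by
    obtain v | e := w
    · obtain ⟨y, hyf, hyv⟩ := exists_mem_ne (hE f.1 f.2) v
      exact ⟨y, hyf, by simpa using hyv⟩
    · obtain ⟨y, hyf⟩ := Finset.card_pos.mp (by linarith [hE f.1 f.2])
      exact ⟨y, hyf, Sum.inl_ne_inr⟩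
  refine ⟨y, hyw, Adj.reachable ?_⟩
  exact (deleteIncidenceSet_adj (G := incidenceGraph E)).mpr ⟨by exact hyf, ha, hyw⟩

lemma reachable_deleteIncidenceSet_inl (hE : ∀ e ∈ E, 2 ≤ e.card)
    (hcv : ∀ v, ¬ HCutVertex E v) {v : V} {a b : V ⊕ E} (ha : a ≠ .inl v)
    (hb : b ≠ .inl v) :
    ((incidenceGraph E).deleteIncidenceSet (.inl v)).Reachable a b := by
  set H := (incidenceGraph E).deleteIncidenceSet (.inl v)
  by_contra hab
  obtain ⟨x, hxv, hx⟩ := exists_reachable_inl_deleteIncidenceSet hE ha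
  obtain ⟨y, hyv, hy⟩ := exists_reachable_inl_deleteIncidenceSet hE hb
  set R := {z | H.Reachable a (.inl z)}
  refine hcv v ⟨R \ {v}, Rᶜ \ {v}, ⟨x, hx, by simpa using hxv⟩,
    ⟨y, fun h => hab (h.trans hy.symm), by simpa using hyv⟩,
    disjoint_compl_right.mono Set.sdiff_subset Set.sdiff_subset, by simp, by simp,
    fun z => by simp only [Set.mem_sdiff, Set.mem_compl_iff]; tauto, fun f hf => ?_⟩
  have := subset_or_subset_compl_of_forall_adj (H := H) (f := ⟨f, hf⟩) (s := ↑f \ {v}) a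
    fun z hz => deleteIncidenceSet_adj.mpr ⟨by exact hz.1, by simpa using hz.2, by simp⟩
  simpa [Set.sdiff_subset_iff] using this

lemma reachable_deleteIncidenceSet_inr (hE : ∀ e ∈ E, 2 ≤ e.card)
    (hce : ∀ e, ¬ HCutEdge E e) {e : E} {a b : V ⊕ E} (ha : a ≠ .inr e) (hb : b ≠ .inr e) :
    ((incidenceGraph E).deleteIncidenceSet (.inr e)).Reachable a b := by
  set H := (incidenceGraph E).deleteIncidenceSet (.inr e)
  by_contra hab
  obtain ⟨x, -, hx⟩ := exists_reachable_inl_deleteIncidenceSet hE ha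
  obtain ⟨y, -, hy⟩ := exists_reachable_inl_deleteIncidenceSet hE hb
  refine hce e ⟨e.2, {z | H.Reachable a (.inl z)}, {z | H.Reachable a (.inl z)}ᶜ, ⟨x, hx⟩,
    ⟨y, fun h => hab (h.trans hy.symm)⟩, disjoint_compl_right, fun z => em _,
    fun f hf hfe => subset_or_subset_compl_of_forall_adj (f := ⟨f, hf⟩) a fun z hz => ?_⟩
  exact deleteIncidenceSet_adj.mpr ⟨by exact hz, by simp, by simpa [Subtype.ext_iff] using hfe⟩

lemma reachable_deleteIncidenceSet (hE : ∀ e ∈ E, 2 ≤ e.card) (hcv : ∀ v, ¬ HCutVertex E v)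
    (hce : ∀ e, ¬ HCutEdge E e) (w a b : V ⊕ E) (ha : a ≠ w) (hb : b ≠ w) :
    ((incidenceGraph E).deleteIncidenceSet w).Reachable a b := by
  obtain v | e := w
  exacts [reachable_deleteIncidenceSet_inl hE hcv ha hb,
    reachable_deleteIncidenceSet_inr hE hce ha hb]

lemma not_isBridge_incidenceGraph (hE : ∀ e ∈ E, 2 ≤ e.card) (hce : ∀ e, ¬ HCutEdge E e)
    ⦃a b : V ⊕ E⦄ (h : (incidenceGraph E).Adj a b) :
    ¬ (incidenceGraph E).IsBridge s(a, b) := by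
  suffices key : ∀ (x : V) (f : E), x ∈ f.1 →
      ¬ (incidenceGraph E).IsBridge s(.inl x, .inr f) by
    rcases a with x | f <;> rcases b with y | g
    exacts [h.elim, key x g h, Sym2.eq_swap (a := Sum.inr f) ▸ key y f h, h.elim]
  intro x f hxf hbr
  rw [isBridge_iff] at hbr
  set H := (incidenceGraph E).deleteEdges {s(.inl x, .inr f)}
  have hadj (g : E) (z : V) (hz : z ∈ g.1) (hzg : z ≠ x ∨ g ≠ f) :
      H.Adj (.inl z) (.inr g) :=
    deleteEdges_adj.mpr ⟨hz, by simpa using fun h1 h2 => hzg.elim (· h1) (· h2)⟩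
  obtain ⟨y, hyf, hyx⟩ := exists_mem_ne (hE f.1 f.2) x
  refine hce f ⟨f.2, {z | H.Reachable (.inl x) (.inl z)}, {z | H.Reachable (.inl x) (.inl z)}ᶜ,
    ⟨x, .rfl⟩, ⟨y, fun h => hbr (h.trans (hadj f y hyf (.inl hyx)).reachable)⟩,
    disjoint_compl_right, fun z => em _, fun g hg hgf => ?_⟩
  exact subset_or_subset_compl_of_forall_adj (f := ⟨g, hg⟩) _
    fun z hz => hadj _ z hz (.inr (by simpa [Subtype.ext_iff] using hgf))

lemma hasBergeCycleThrough_of_isCycle {u v : V} {c : (incidenceGraph E).Walk (.inl v) (.inl v)}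
    (hc : c.IsCycle) (hu : .inl u ∈ c.support) : HasBergeCycleThrough E u v := by
  have hparity := incidenceGraph_isLeft_getVert_iff c
  obtain ⟨k, hk⟩ : Even c.length := (hparity le_rfl).mp (by simp)
  obtain ⟨m, rfl⟩ : ∃ m, k = m + 2 := ⟨k - 2, by have := hc.three_le_length; omega⟩
  have hinj {i j : ℕ} (hi : i < c.length) (hj : j < c.length)
      (h : c.getVert i = c.getVert j) : i = j :=
    hc.getVert_injOn' (by simp; omega) (by simp; omega) h
  have hx (i : Fin (m + 2)) : ∃ x, c.getVert (2 * i) = .inl x :=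
    Sum.isLeft_iff.mp ((hparity (by omega)).mpr (even_two_mul _))
  have hf (i : Fin (m + 2)) : ∃ f, c.getVert (2 * i + 1) = .inr f := by
    refine Sum.isRight_iff.mp (Sum.not_isLeft.mp fun h => ?_)
    exact Nat.not_even_two_mul_add_one _ ((hparity (by omega)).mp h)
  choose x hx using hx
  choose f hf using hf
  have hx0 : x 0 = v := by simpa using (hx 0).symm
  have hxsucc (i : Fin (m + 2)) : c.getVert (2 * i + 2) = .inl (x (i + 1)) := by
    rw [← hx, Fin.val_add_one]
    split_ifs with hi
    · rw [hi, Fin.val_last, show 2 * (m + 1) + 2 = c.length by omega, Walk.getVert_length]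
      simp
    · rfl
  refine ⟨m, x, fun i => f i, fun i j h => ?_, fun i j h => ?_, ?_, ⟨0, hx0⟩, fun i => ?_⟩
  · have := hinj (i := 2 * i) (j := 2 * j) (by omega) (by omega) (by rw [hx, hx, h])
    exact Fin.ext (by omega)
  · have := hinj (i := 2 * i + 1) (j := 2 * j + 1) (by omega) (by omega)
      (by rw [hf, hf, Subtype.ext h])
    exact Fin.ext (by omega)
  · obtain ⟨n, hn, hnle⟩ := Walk.mem_support_iff_exists_getVert.mp hu
    obtain ⟨t, rfl⟩ := (hparity hnle).mp (by simp [hn])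
    by_cases ht : t < m + 2
    · refine ⟨⟨t, ht⟩, Sum.inl_injective (β := E) ?_⟩
      rw [← hx, ← hn, ← two_mul]
    · refine ⟨0, Sum.inl_injective (β := E) ?_⟩
      rw [hx0, ← hn, show t + t = c.length by omega, Walk.getVert_length]
  · have h1 := c.adj_getVert_succ (i := 2 * i) (by omega)
    have h2 := c.adj_getVert_succ (i := 2 * i + 1) (by omega)
    rw [hx, hf] at h1
    rw [hf, hxsucc] at h2
    exact ⟨(f i).2, h1, h2⟩

end IncidenceGraph

theorem bergeCycle_through_two_vertices_general {V : Type*}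
    (E : Finset (Finset V)) (r : ℕ)
    (hr : r ≥ 3) (huniform : ∀ e ∈ E, e.card = r)
    (h2conn : HTwoConnected E) (u v : V) (huv : u ≠ v) :
    HasBergeCycleThrough E u v := by
  obtain ⟨hconn, hcv, hce⟩ := h2conn
  have hE : ∀ e ∈ E, 2 ≤ e.card := fun e he => by rw [huniform e he]; omega
  obtain ⟨c, hc, huc⟩ := exists_isCycle_mem_support_of_reachable
    (reachable_deleteIncidenceSet hE hcv hce) (not_isBridge_incidenceGraph hE hce)
    (Sum.inl_injective.ne huv) (hconn.reachable_incidenceGraph v u)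
  exact hasBergeCycleThrough_of_isCycle hc huc

/-- In a 2-connected `r`-uniform hypergraph on `n ≥ r ≥ 3` vertices, any two distinct
vertices lie on a common Berge cycle (as defining vertices). -/
theorem bergeCycle_through_two_vertices {V : Type*} [Fintype V]
    (E : Finset (Finset V)) (n r : ℕ) (hn : Fintype.card V = n)
    (hnr : n ≥ r) (hr : r ≥ 3) (huniform : ∀ e ∈ E, e.card = r)
    (h2conn : HTwoConnected E) (u v : V) (huv : u ≠ v) :
    HasBergeCycleThrough E u v :=
  bergeCycle_through_two_vertices_general E r hr huniform h2conn u v huv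
end

section
/- For every graph G, vertices u, v, and integer r ≥ 2, the number of r-cliques in G is at most the number of r-cliques in the Kelmans shift G[u→v]. -/
/- A clique `S` of `G` that is destroyed by the shift contains `u` but not `v`, and a neighbour
`w` of `u` outside `N(v)`. Sending such an `S` to `S - u + v` gives a clique of `G[u→v]` that is
not a clique of `G` (it contains the non-edge `vw`), while the cliques that survive the shift are
kept fixed. This map from the `r`-cliques of `G` to those of `G[u→v]` is injective. -/

open SimpleGraph

/-- The Kelmans operation `G[u → v]`: for each vertex `x ∉ {u, v}` adjacent to `u`
but not to `v`, the edge `ux` is deleted and the edge `vx` is added. -/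
def kelmans {V : Type*} (G : SimpleGraph V) (u v : V) : SimpleGraph V where
  Adj x y := x ≠ y ∧
    ((G.Adj x y ∧ ¬((x = u ∧ ¬ G.Adj v y ∧ y ≠ v) ∨ (y = u ∧ ¬ G.Adj v x ∧ x ≠ v))) ∨
     (x = v ∧ G.Adj u y ∧ ¬ G.Adj v y ∧ y ≠ u) ∨
     (y = v ∧ G.Adj u x ∧ ¬ G.Adj v x ∧ x ≠ u))
  symm := by
    constructor
    rintro x y ⟨hne, h⟩
    refine ⟨hne.symm, ?_⟩
    rcases h with ⟨hadj, hnd⟩ | h | h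
    · exact Or.inl ⟨hadj.symm, fun hc => hnd hc.symm⟩
    · exact Or.inr (Or.inr h)
    · exact Or.inr (Or.inl h)
  loopless := ⟨fun x h => h.1 rfl⟩

theorem Finset.eq_of_insert_erase_eq {α : Type*} [DecidableEq α] {s t : Finset α} {a b : α}
    (has : a ∈ s) (hbs : b ∉ s) (hat : a ∈ t) (hbt : b ∉ t)
    (h : insert b (s.erase a) = insert b (t.erase a)) : s = t := by
  have hbs' : b ∉ s.erase a := fun hb => hbs (mem_of_mem_erase hb)
  have hbt' : b ∉ t.erase a := fun hb => hbt (mem_of_mem_erase hb)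
  rw [← insert_erase has, ← insert_erase hat, ← erase_insert hbs', ← erase_insert hbt', h]

namespace SimpleGraph

variable {V : Type*} {G : SimpleGraph V} {u v x y : V}

theorem kelmans_adj_iff_of_adj (h : G.Adj x y) :
    (kelmans G u v).Adj x y ↔
      ¬((x = u ∧ ¬G.Adj v y ∧ y ≠ v) ∨ (y = u ∧ ¬G.Adj v x ∧ x ≠ v)) := by
  constructor
  · rintro ⟨-, ⟨-, hkept⟩ | ⟨rfl, -, hvy, -⟩ | ⟨rfl, -, hvx, -⟩⟩
    · exact hkept
    · exact absurd h hvy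
    · exact absurd h.symm hvx
  · exact fun hkept => ⟨h.ne, Or.inl ⟨h, hkept⟩⟩

theorem kelmans_adj_of_adj_of_ne (h : G.Adj x y) (hx : x ≠ u) (hy : y ≠ u) :
    (kelmans G u v).Adj x y :=
  (kelmans_adj_iff_of_adj h).2 (by tauto)

theorem kelmans_adj_of_adj_left (h : G.Adj u x) (hx : x ≠ v) : (kelmans G u v).Adj v x := by
  by_cases hvx : G.Adj v x
  · exact (kelmans_adj_iff_of_adj hvx).2 fun hlost => by
      rcases hlost with ⟨-, hnvx, -⟩ | ⟨rfl, -, -⟩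
      · exact hnvx hvx
      · exact h.ne rfl
  · exact ⟨hx.symm, Or.inr (Or.inl ⟨rfl, h, hvx, h.ne'⟩)⟩

variable {r : ℕ} {S : Finset V}

theorem IsNClique.exists_of_not_isNClique_kelmans (hS : G.IsNClique r S)
    (hK : ¬(kelmans G u v).IsNClique r S) :
    u ∈ S ∧ v ∉ S ∧ ∃ w ∈ S, G.Adj u w ∧ ¬G.Adj v w := by
  obtain ⟨b, hb, hub, hvb, hbv, hu⟩ :
      ∃ b ∈ S, G.Adj u b ∧ ¬G.Adj v b ∧ b ≠ v ∧ u ∈ S := by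
    have hnK : ¬(kelmans G u v).IsClique (S : Set V) := fun h => hK ⟨h, hS.2⟩
    obtain ⟨x, hx, y, hy, hxy, hnadj⟩ : ∃ x ∈ S, ∃ y ∈ S, x ≠ y ∧ ¬(kelmans G u v).Adj x y := by
      simpa [isClique_iff, Set.Pairwise] using hnK
    have hGxy := hS.1 hx hy hxy
    rw [kelmans_adj_iff_of_adj hGxy, not_not] at hnadj
    rcases hnadj with ⟨rfl, hvy, hyv⟩ | ⟨rfl, hvx, hxv⟩
    · exact ⟨y, hy, hGxy, hvy, hyv, hx⟩
    · exact ⟨x, hx, hGxy.symm, hvx, hxv, hy⟩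
  exact ⟨hu, fun hv => hvb (hS.1 hv hb hbv.symm), b, hb, hub, hvb⟩

theorem IsNClique.kelmans_of_notMem (hS : G.IsNClique r S) (hu : u ∉ S) :
    (kelmans G u v).IsNClique r S :=
  ⟨fun _ ha _ hb hab => kelmans_adj_of_adj_of_ne (hS.1 ha hb hab)
    (ne_of_mem_of_not_mem ha hu) (ne_of_mem_of_not_mem hb hu), hS.2⟩

theorem IsNClique.kelmans_insert_erase [DecidableEq V] (hS : G.IsNClique r S) (hu : u ∈ S)
    (hv : v ∉ S) : (kelmans G u v).IsNClique r (insert v (S.erase u)) := by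
  have hr : r - 1 + 1 = r := Nat.sub_add_cancel (hS.2 ▸ Finset.card_pos.2 ⟨u, hu⟩)
  refine hr ▸ ((hS.erase_of_mem hu).kelmans_of_notMem (S.notMem_erase u)).insert fun b hb => ?_
  have hbS := Finset.mem_of_mem_erase hb
  exact kelmans_adj_of_adj_left (hS.1 hu hbS (Finset.ne_of_mem_erase hb).symm)
    (ne_of_mem_of_not_mem hbS hv)

theorem IsNClique.not_isClique_insert_erase_of_not_isNClique_kelmans [DecidableEq V]
    (hS : G.IsNClique r S) (hK : ¬(kelmans G u v).IsNClique r S) :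
    ¬G.IsClique (insert v (S.erase u) : Finset V) := by
  obtain ⟨-, hv, w, hw, huw, hvw⟩ := hS.exists_of_not_isNClique_kelmans hK
  intro hclique
  exact hvw (hclique (by simp) (by simp [hw, huw.ne']) (ne_of_mem_of_not_mem hw hv).symm)

end SimpleGraph

theorem kelmans_cliques_le_general {V : Type*} [Fintype V] (G : SimpleGraph V) (u v : V)
    (r : ℕ) :
    {s : Finset V | G.IsNClique r s}.ncard ≤
      {s : Finset V | (kelmans G u v).IsNClique r s}.ncard := by
  classical
  refine Set.ncard_le_ncard_of_injOn
    (fun S => if (kelmans G u v).IsNClique r S then S else insert v (S.erase u)) ?_ ?_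
  · intro S (hS : G.IsNClique r S)
    split_ifs with hK
    · exact hK
    · obtain ⟨hu, hv, -⟩ := hS.exists_of_not_isNClique_kelmans hK
      exact hS.kelmans_insert_erase hu hv
  · intro S₁ (h₁ : G.IsNClique r S₁) S₂ (h₂ : G.IsNClique r S₂) heq
    dsimp only at heq
    split_ifs at heq with hK₁ hK₂ hK₂
    · exact heq
    · exact absurd (heq ▸ h₁.1) (h₂.not_isClique_insert_erase_of_not_isNClique_kelmans hK₂)
    · exact absurd (heq ▸ h₂.1) (h₁.not_isClique_insert_erase_of_not_isNClique_kelmans hK₁)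
    · obtain ⟨hu₁, hv₁, -⟩ := h₁.exists_of_not_isNClique_kelmans hK₁
      obtain ⟨hu₂, hv₂, -⟩ := h₂.exists_of_not_isNClique_kelmans hK₂
      exact Finset.eq_of_insert_erase_eq hu₁ hv₁ hu₂ hv₂ heq

/-- The Kelmans shift does not decrease the number of `r`-cliques. -/
theorem kelmans_cliques_le {V : Type*} [Fintype V] (G : SimpleGraph V) (u v : V)
    (r : ℕ) (hr : 2 ≤ r) :
    {s : Finset V | G.IsNClique r s}.ncard ≤
      {s : Finset V | (kelmans G u v).IsNClique r s}.ncard :=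
  kelmans_cliques_le_general G u v r
end

section
/- Let H be a Berge-F-free r-uniform hypergraph for a graph F. Then there exists an F-free graph G on the vertex set of H, a red-blue coloring of the edges of G, and an injection M from the edge set of G to the hyperedge set of H with e ⊆ M(e) for each edge e, such that the number of hyperedges of H is at most the number of blue edges of G plus the number of r-cliques of G all of whose edges are red. -/
/-!
Write `t h` for the set of pairs of distinct vertices of a hyperedge `h` and choose `X ⊆ H`
maximizing the Hall deficiency `|X| - |⋃_{h ∈ X} t h|`. Maximality yields Hall's condition twice:
the hyperedges outside `X` can be matched to distinct pairs not covered by `X`, and the pairs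
covered by `X` can be matched to distinct hyperedges of `X`. Let `G` consist of all these pairs,
red when covered by `X` and blue otherwise. The two matchings together inject the edges of `G`
into `H`, so a copy of `F` in `G` would be a Berge copy of `F` in `H`. Each hyperedge outside `X`
owns a blue edge of its own, and each hyperedge of `X` is itself a red `r`-clique.
-/

open SimpleGraph Finset

/-- The hypergraph `E` contains a Berge copy of the graph `F`: an injection of the
vertices of `F` and an injection `φ` of the edges of `F` into hyperedges with
`f(e) ⊆ φ(e)`. -/
def ContainsBerge {W V : Type*} (F : SimpleGraph W) (E : Finset (Finset V)) : Prop :=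
  ∃ (f : W → V) (φ : F.edgeSet → Finset V), Function.Injective f ∧
    Function.Injective φ ∧
    ∀ e : F.edgeSet, φ e ∈ E ∧ ∀ x ∈ (e : Sym2 W), f x ∈ φ e

/-- The graph `G` contains a (subgraph) copy of `F`. -/
def ContainsCopy {W V : Type*} (F : SimpleGraph W) (G : SimpleGraph V) : Prop :=
  ∃ f : F →g G, Function.Injective f

open Function

namespace Finset

variable {ι α : Type*} [DecidableEq α]

theorem exists_injective_of_forall_subset_card_le_card_biUnion (s : Finset ι) (t : ι → Finset α)
    (h : ∀ Y ⊆ s, #Y ≤ #(Y.biUnion t)) : ∃ f : s → α, Injective f ∧ ∀ i : s, f i ∈ t i := by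
  refine (all_card_le_biUnion_card_iff_exists_injective fun i : s ↦ t i).1 fun Y ↦ ?_
  have hY := h (Y.map (Embedding.subtype _)) fun i hi ↦ by
    obtain ⟨j, -, rfl⟩ := mem_map.1 hi
    exact j.2
  convert hY using 2
  · exact (card_map _).symm
  · ext a; simp

def deficiency (t : ι → Finset α) (X : Finset ι) : ℤ := #X - #(X.biUnion t)

variable [DecidableEq ι] {s X : Finset ι} {t : ι → Finset α}

theorem card_le_card_biUnion_sdiff_of_deficiency_le (hXs : X ⊆ s)
    (hmax : ∀ Y ⊆ s, deficiency t Y ≤ deficiency t X) {Y : Finset ι} (hY : Y ⊆ s \ X) :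
    #Y ≤ #(Y.biUnion fun i ↦ t i \ X.biUnion t) := by
  have hdisj : Disjoint X Y := disjoint_of_subset_right hY disjoint_sdiff
  have hXY := hmax (X ∪ Y) (union_subset hXs (hY.trans sdiff_subset))
  have hN : (X ∪ Y).biUnion t = (Y.biUnion fun i ↦ t i \ X.biUnion t) ∪ X.biUnion t := by
    ext a; simp only [mem_biUnion, mem_union, mem_sdiff]; grind
  have hdisjN : Disjoint (Y.biUnion fun i ↦ t i \ X.biUnion t) (X.biUnion t) := by
    simp only [disjoint_biUnion_left]; exact fun _ _ ↦ sdiff_disjoint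
  rw [deficiency, deficiency, hN, card_union_of_disjoint hdisj, card_union_of_disjoint hdisjN] at hXY
  omega

theorem card_le_card_biUnion_filter_of_deficiency_le
    (hmax : ∀ Y ⊆ X, deficiency t Y ≤ deficiency t X) {Z : Finset α} (hZ : Z ⊆ X.biUnion t) :
    #Z ≤ #(Z.biUnion fun a ↦ {i ∈ X | a ∈ t i}) := by
  set XZ := Z.biUnion fun a ↦ {i ∈ X | a ∈ t i}
  have hY := hmax (X \ XZ) sdiff_subset
  have hXZ : XZ ⊆ X := biUnion_subset.2 fun _ _ ↦ filter_subset _ _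
  have hNY : (X \ XZ).biUnion t ⊆ X.biUnion t \ Z := by
    intro a; simp only [XZ, mem_biUnion, mem_sdiff, mem_filter]; grind
  have hNYcard := card_le_card hNY
  rw [card_sdiff_of_subset hZ] at hNYcard
  rw [deficiency, deficiency, card_sdiff_of_subset hXZ] at hY
  have hXZcard := card_le_card hXZ
  have hZcard := card_le_card hZ
  omega

theorem exists_deficiency_decomposition (s : Finset ι) (t : ι → Finset α) :
    ∃ X ⊆ s, (∃ f : ↥(s \ X) → α, Injective f ∧ ∀ i : ↥(s \ X), f i ∈ t i \ X.biUnion t) ∧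
      ∃ g : ↥(X.biUnion t) → ι, Injective g ∧ ∀ a : ↥(X.biUnion t), g a ∈ X ∧ ↑a ∈ t (g a) := by
  obtain ⟨X, hXs, hmax⟩ := exists_max_image s.powerset (deficiency t) ⟨∅, empty_mem_powerset s⟩
  rw [mem_powerset] at hXs
  simp only [mem_powerset] at hmax
  refine ⟨X, hXs, exists_injective_of_forall_subset_card_le_card_biUnion _ _
    fun Y hY ↦ card_le_card_biUnion_sdiff_of_deficiency_le hXs hmax hY, ?_⟩
  obtain ⟨g, hg, hgt⟩ := exists_injective_of_forall_subset_card_le_card_biUnion _ _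
    fun Z hZ ↦ card_le_card_biUnion_filter_of_deficiency_le (fun Y hY ↦ hmax Y (hY.trans hXs)) hZ
  exact ⟨g, hg, fun a ↦ mem_filter.1 (hgt a)⟩

theorem exists_injOn_of_max_deficiency [Nonempty ι] (s : Finset ι) (t : ι → Finset α) :
    ∃ X ⊆ s, ∃ (f : ↥(s \ X) → α) (μ : α → ι), Injective f ∧
      (∀ i : ↥(s \ X), f i ∈ t i \ X.biUnion t) ∧
      Set.InjOn μ (↑(X.biUnion t) ∪ Set.range f) ∧
      ∀ a ∈ (↑(X.biUnion t) ∪ Set.range f : Set α), μ a ∈ s ∧ a ∈ t (μ a) := by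
  classical
  obtain ⟨X, hXs, ⟨f, hf, hft⟩, g, hg, hgt⟩ := exists_deficiency_decomposition s t
  -- `μ` inverts `f` on its range and extends `g`; its other values are irrelevant.
  set μ : α → ι := extend f Subtype.val (extend Subtype.val g fun _ ↦ Classical.arbitrary ι)
  have hμf (i : ↥(s \ X)) : μ (f i) = i := hf.extend_apply _ _ _
  have hμg (a : ↥(X.biUnion t)) : μ a = g a := by
    rw [show μ a = _ from extend_apply' _ _ _ ?_, Subtype.val_injective.extend_apply]
    rintro ⟨i, hi⟩
    exact (mem_sdiff.1 (hft i)).2 (hi ▸ a.2)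
  refine ⟨X, hXs, f, μ, hf, hft, ?_, ?_⟩
  · rintro _ (ha | ⟨i, rfl⟩) _ (hb | ⟨j, rfl⟩) hab
    · exact congrArg Subtype.val (hg (by simpa [hμg ⟨_, ha⟩, hμg ⟨_, hb⟩] using hab))
    · rw [hμg ⟨_, ha⟩, hμf] at hab
      exact absurd (hab ▸ (hgt _).1) (mem_sdiff.1 j.2).2
    · rw [hμg ⟨_, hb⟩, hμf] at hab
      exact absurd (hab ▸ (hgt _).1) (mem_sdiff.1 i.2).2
    · rw [hμf, hμf] at hab
      rw [Subtype.val_injective hab]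
  · rintro _ (ha | ⟨i, rfl⟩)
    · obtain ⟨hgX, hgt⟩ := hgt ⟨_, ha⟩
      rw [hμg ⟨_, ha⟩]
      exact ⟨hXs hgX, hgt⟩
    · rw [hμf]
      exact ⟨(mem_sdiff.1 i.2).1, (mem_sdiff.1 (hft i)).1⟩

end Finset

theorem ContainsCopy.containsBerge {W V : Type*} {F : SimpleGraph W} {G : SimpleGraph V}
    {H : Finset (Finset V)} (hFG : ContainsCopy F G) (M : G.edgeSet → Finset V)
    (hM : Injective M) (hMH : ∀ e : G.edgeSet, M e ∈ H ∧ ∀ x ∈ (e : Sym2 V), x ∈ M e) :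
    ContainsBerge F H := by
  obtain ⟨f, hf⟩ := hFG
  refine ⟨f, M ∘ f.mapEdgeSet, hf, hM.comp (Hom.mapEdgeSet.injective f hf), fun e ↦
    ⟨(hMH _).1, fun x hx ↦ (hMH _).2 _ (Sym2.mem_map.2 ⟨x, hx, rfl⟩)⟩⟩

section

variable {V : Type*} [DecidableEq V]

namespace Finset

def offDiagSym2 (h : Finset V) : Finset (Sym2 V) := {e ∈ h.sym2 | ¬ e.IsDiag}

theorem mem_offDiagSym2 {h : Finset V} {e : Sym2 V} :
    e ∈ h.offDiagSym2 ↔ ¬ e.IsDiag ∧ ∀ x ∈ e, x ∈ h := by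
  rw [offDiagSym2, mem_filter, mem_sym2_iff, and_comm]

theorem mk_mem_offDiagSym2 {h : Finset V} {x y : V} :
    s(x, y) ∈ h.offDiagSym2 ↔ x ∈ h ∧ y ∈ h ∧ x ≠ y := by
  rw [offDiagSym2, mem_filter, mk_mem_sym2_iff, Sym2.mk_isDiag_iff, and_assoc]

end Finset

theorem SimpleGraph.isNClique_of_offDiagSym2_subset {G : SimpleGraph V} {h : Finset V}
    (hG : ↑h.offDiagSym2 ⊆ G.edgeSet) : G.IsNClique #h h :=
  ⟨fun _ hx _ hy hxy ↦ hG (mk_mem_offDiagSym2.2 ⟨hx, hy, hxy⟩), rfl⟩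

end

/-- If `H` is a Berge-`F`-free `r`-uniform hypergraph, then there is an `F`-free
graph `G` on its vertex set, a red–blue coloring `c` of its edges (`true` = red),
and an injection `M` of the edges of `G` into hyperedges of `H` with `e ⊆ M(e)`,
such that `e(H)` is at most the number of blue edges plus the number of red
`r`-cliques of `G`. -/
theorem berge_free_reduction {W V : Type*} [Fintype V] (F : SimpleGraph W) (r : ℕ)
    (H : Finset (Finset V)) (huniform : ∀ e ∈ H, e.card = r)
    (hfree : ¬ ContainsBerge F H) :
    ∃ (G : SimpleGraph V) (c : Sym2 V → Bool) (M : G.edgeSet → Finset V),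
      ¬ ContainsCopy F G ∧
      Function.Injective M ∧
      (∀ e : G.edgeSet, M e ∈ H ∧ ∀ x ∈ (e : Sym2 V), x ∈ M e) ∧
      H.card ≤ {e : Sym2 V | e ∈ G.edgeSet ∧ c e = false}.ncard +
        {s : Finset V | G.IsNClique r s ∧
          ∀ x ∈ s, ∀ y ∈ s, x ≠ y → c s(x, y) = true}.ncard := by
  classical
  obtain ⟨X, hXH, f, μ, hf, hfX, hμ, hμt⟩ := exists_injOn_of_max_deficiency H offDiagSym2
  set N := X.biUnion offDiagSym2
  set G := fromEdgeSet (↑N ∪ Set.range f)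
  have hG : G.edgeSet = ↑N ∪ Set.range f :=
    (edgeSet_fromEdgeSet _).trans <| sdiff_eq_left.2 <| Set.disjoint_left.2 fun e he hdiag ↦
      (mem_offDiagSym2.1 (hμt e he).2).1 hdiag
  have hMH (e : G.edgeSet) : μ e ∈ H ∧ ∀ x ∈ (e : Sym2 V), x ∈ μ e :=
    ⟨(hμt e (hG ▸ e.2)).1, (mem_offDiagSym2.1 (hμt e (hG ▸ e.2)).2).2⟩
  have hM : Injective fun e : G.edgeSet ↦ μ e :=
    fun e e' h ↦ Subtype.ext (hμ (hG ▸ e.2) (hG ▸ e'.2) h)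
  refine ⟨G, fun e ↦ decide (e ∈ N), fun e ↦ μ e, fun hcopy ↦ hfree (hcopy.containsBerge _ hM hMH),
    hM, hMH, ?_⟩
  rw [← card_sdiff_add_card_eq_card hXH]
  gcongr
  · calc #(H \ X) = (Set.range f).ncard := by
          rw [Set.ncard_range_of_injective hf, Nat.card_eq_fintype_card, Fintype.card_coe]
      _ ≤ _ := by
          refine Set.ncard_le_ncard ?_
          rintro _ ⟨i, rfl⟩
          exact ⟨hG ▸ Or.inr ⟨i, rfl⟩, decide_eq_false (mem_sdiff.1 (hfX i)).2⟩
  · rw [← Set.ncard_coe_finset X]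
    refine Set.ncard_le_ncard fun h hX ↦ ⟨?_, fun x hx y hy hxy ↦ ?_⟩
    · exact huniform h (hXH hX) ▸ isNClique_of_offDiagSym2_subset fun e he ↦
        hG ▸ Or.inl (mem_biUnion.2 ⟨h, hX, he⟩)
    · exact decide_eq_true (mem_biUnion.2 ⟨h, hX, mk_mem_offDiagSym2.2 ⟨hx, hy, hxy⟩⟩)
end

section
/- Let t ≥ r-1 ≥ 2 and let v be a vertex of degree at most t in a red-blue edge-colored graph, with i of its incident edges blue. Then the number of blue edges incident to v plus the number of red r-cliques containing v is at most max(t, C(t, r-1)); in particular if t ≥ r this quantity is at most C(t, r-1), and if the degree of v is at most t-1 it is at most C(t, r-1) - 1. -/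
open SimpleGraph Finset

private lemma self_le_choose_aux : ∀ t k : ℕ, 1 ≤ k → k < t → t ≤ t.choose k := by
  intro t
  induction t with
  | zero => omega
  | succ n ih =>
    intro k hk1 hkt
    obtain ⟨j, rfl⟩ : ∃ j, k = j + 1 := ⟨k - 1, by omega⟩
    rw [Nat.choose_succ_succ]
    simp only [Nat.succ_eq_add_one]
    rcases lt_or_eq_of_le (Nat.lt_succ_iff.mp hkt) with h | h
    · have h1 := ih (j + 1) hk1 h
      have h2 : 1 ≤ n.choose j := Nat.choose_pos (by omega)
      omega
    · subst h
      rw [Nat.choose_self, Nat.choose_succ_self_right]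

private lemma bound_aux (k : ℕ) (hk : 2 ≤ k) :
    ∀ i m t : ℕ, k + 1 ≤ t → i + m ≤ t → i + m.choose k ≤ t.choose k := by
  intro i
  induction i with
  | zero => intro m t _ h; simpa using Nat.choose_le_choose k (by omega)
  | succ i ih =>
    intro m t ht h
    rcases lt_or_ge m (k - 1) with hm | hm
    · rw [Nat.choose_eq_zero_of_lt (by omega)]
      have := self_le_choose_aux t k (by omega) (by omega)
      omega
    · have hstep : m.choose k + 1 ≤ (m + 1).choose k := by
        have : (m + 1).choose k = m.choose (k - 1) + m.choose k := by
          obtain ⟨j, rfl⟩ : ∃ j, k = j + 1 := ⟨k - 1, by omega⟩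
          rw [Nat.choose_succ_succ]
          simp
        have : 1 ≤ m.choose (k - 1) := Nat.choose_pos (by omega)
        omega
      have := ih (m + 1) t ht (by omega)
      omega

/-- In a red–blue edge-colored graph (`c e = true` means red), the number of blue
edges at a vertex of degree at most `t` plus the number of red `r`-cliques
containing it is at most `max t C(t, r-1)`; if moreover `t ≥ r` it is at most
`C(t, r-1)`, and if the degree is at most `t-1` it is at most `C(t, r-1) - 1`. -/
theorem blue_plus_redCliques_at_vertex {V : Type*} [Fintype V] [DecidableEq V]
    (G : SimpleGraph V) [DecidableRel G.Adj] (c : Sym2 V → Bool)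
    (t r : ℕ) (hr : 2 ≤ r - 1) (htr : r - 1 ≤ t) (v : V) (hdeg : G.degree v ≤ t) :
    ({x : V | G.Adj v x ∧ c s(v, x) = false}.ncard +
      {s : Finset V | v ∈ s ∧ G.IsNClique r s ∧
        ∀ x ∈ s, ∀ y ∈ s, x ≠ y → c s(x, y) = true}.ncard ≤
          max t (t.choose (r - 1))) ∧
    (r ≤ t →
      {x : V | G.Adj v x ∧ c s(v, x) = false}.ncard +
        {s : Finset V | v ∈ s ∧ G.IsNClique r s ∧
          ∀ x ∈ s, ∀ y ∈ s, x ≠ y → c s(x, y) = true}.ncard ≤ t.choose (r - 1)) ∧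
    (r ≤ t → G.degree v ≤ t - 1 →
      {x : V | G.Adj v x ∧ c s(v, x) = false}.ncard +
        {s : Finset V | v ∈ s ∧ G.IsNClique r s ∧
          ∀ x ∈ s, ∀ y ∈ s, x ≠ y → c s(x, y) = true}.ncard ≤
            t.choose (r - 1) - 1) := by
  classical
  set k := r - 1 with hk
  set B := (G.neighborFinset v).filter (fun x => c s(v, x) = false) with hB
  set R := (G.neighborFinset v).filter (fun x => c s(v, x) = true) with hR
  have hBR : B.card + R.card = G.degree v := by
    have h := Finset.card_filter_add_card_filter_not (s := G.neighborFinset v)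
      (p := fun x => c s(v, x) = false)
    have hRe : (G.neighborFinset v).filter (fun a => ¬ c s(v, a) = false) = R := by
      apply Finset.filter_congr
      intro x _
      simp
    simp only [hRe] at h
    rw [hB, ← SimpleGraph.card_neighborFinset_eq_degree]
    exact h
  have hset1 : {x : V | G.Adj v x ∧ c s(v, x) = false} = ↑B := by
    ext x; simp [hB]
  have hcard1 : {x : V | G.Adj v x ∧ c s(v, x) = false}.ncard = B.card := by
    rw [hset1, Set.ncard_coe_finset]
  -- bound the clique count
  set T := (R.powersetCard k).image (insert v) with hT
  have hsub : {s : Finset V | v ∈ s ∧ G.IsNClique r s ∧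
      ∀ x ∈ s, ∀ y ∈ s, x ≠ y → c s(x, y) = true} ⊆ ↑T := by
    intro s hs
    obtain ⟨hv, hcl, hred⟩ := hs
    simp only [hT, Finset.coe_image, Set.mem_image, Finset.mem_coe,
      Finset.mem_powersetCard]
    refine ⟨s.erase v, ⟨?_, ?_⟩, Finset.insert_erase hv⟩
    · intro x hx
      have hxv : x ≠ v := Finset.ne_of_mem_erase hx
      have hxs : x ∈ s := Finset.mem_of_mem_erase hx
      have hadj : G.Adj v x := hcl.1 hv hxs (Ne.symm hxv)
      rw [hR, Finset.mem_filter, SimpleGraph.mem_neighborFinset]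
      exact ⟨hadj, hred v hv x hxs (Ne.symm hxv)⟩
    · rw [Finset.card_erase_of_mem hv, hcl.2]
  have hcard2 : {s : Finset V | v ∈ s ∧ G.IsNClique r s ∧
      ∀ x ∈ s, ∀ y ∈ s, x ≠ y → c s(x, y) = true}.ncard ≤ R.card.choose k := by
    calc {s : Finset V | v ∈ s ∧ G.IsNClique r s ∧
        ∀ x ∈ s, ∀ y ∈ s, x ≠ y → c s(x, y) = true}.ncard
        ≤ (↑T : Set (Finset V)).ncard := Set.ncard_le_ncard hsub (Set.toFinite _)
      _ = T.card := Set.ncard_coe_finset T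
      _ ≤ (R.powersetCard k).card := Finset.card_image_le
      _ = R.card.choose k := by rw [Finset.card_powersetCard]
  have key2 : r ≤ t → B.card + R.card.choose k ≤ t.choose k := by
    intro hrt
    exact bound_aux k hr B.card R.card t (by omega) (by omega)
  refine ⟨?_, ?_, ?_⟩
  · rcases le_or_gt r t with hrt | hrt
    · have := key2 hrt
      rw [hcard1]
      exact le_trans (by omega) (le_max_right _ _)
    · -- t = k
      have htk : t = k := by omega
      rw [hcard1]
      rcases lt_or_ge R.card k with hm | hm
      · have : R.card.choose k = 0 := Nat.choose_eq_zero_of_lt hm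
        refine le_trans ?_ (le_max_left _ _)
        omega
      · have hRk : R.card = k := by omega
        have hB0 : B.card = 0 := by omega
        have h1 : R.card.choose k = 1 := by rw [hRk]; exact Nat.choose_self k
        refine le_trans ?_ (le_max_left _ _)
        omega
  · intro hrt
    have := key2 hrt
    rw [hcard1]
    omega
  · intro hrt hdeg'
    have h := bound_aux k hr (B.card + 1) R.card t (by omega) (by omega)
    rw [hcard1]
    omega
end

section
/- Let H be a 2-connected r-uniform hypergraph with r ≥ 3, and let S_1, S_2 be disjoint vertex sets each of size at least 2. Then there exist two Berge paths, one from a vertex u_1 ∈ S_1 to a vertex v_1 ∈ S_2 and another from u_2 ∈ S_1 (u_2 ≠ u_1) to v_2 ∈ S_2 (v_2 ≠ v_1), sharing no defining vertices and no defining hyperedges. -/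
open Finset

/-!
Berge paths in `E` are exactly the paths of the bipartite incidence digraph on `V ⊕ Finset V`
that start and end in `V`. In that digraph no single vertex separates `S₁` from `S₂`: a
separating vertex of `V` is a cut vertex, and a separating hyperedge is a cut hyperedge or
witnesses that `E` is disconnected (as `|Sᵢ| ≥ 2`, each side of the separation contains a point
of `Sᵢ` other than the separator). Menger's theorem for two paths then gives two disjoint
`S₁`–`S₂` walks, which shorten to paths.

Menger's theorem is proved by induction on the number of arcs. Delete an arc `(x, y)`. If still
no single vertex separates, induction applies. Otherwise some `c` separates in the smaller
digraph, so `{c, x}` and `{c, y}` separate in the original one; by induction there are two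
disjoint paths from `A` to `{c, x}` and two from `{c, y}` to `B` avoiding `(x, y)`, and they
splice into the disjoint walks `A → c → B` and `A → x → y → B`.
-/

namespace List

variable {α : Type*}

theorem exists_eq_append_cons_first {p : α → Prop} :
    ∀ {l : List α}, (∃ a ∈ l, p a) → ∃ s a t, l = s ++ a :: t ∧ p a ∧ ∀ b ∈ s, ¬ p b
  | [], ⟨_, h, _⟩ => absurd h not_mem_nil
  | b :: l, h => by
    by_cases hb : p b
    · exact ⟨[], b, l, rfl, hb, by simp⟩
    · obtain ⟨s, a, t, rfl, ha, hs⟩ := exists_eq_append_cons_first (by simpa [hb] using h)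
      exact ⟨b :: s, a, t, rfl, ha, by simpa [hb] using hs⟩

theorem exists_eq_append_cons_last {p : α → Prop} {l : List α} (h : ∃ a ∈ l, p a) :
    ∃ s a t, l = s ++ a :: t ∧ p a ∧ ∀ b ∈ t, ¬ p b := by
  obtain ⟨s, a, t, hl, ha, hs⟩ := exists_eq_append_cons_first (l := l.reverse) (by simpa using h)
  exact ⟨t.reverse, a, s.reverse, by simpa using congrArg reverse hl, ha, by simpa using hs⟩

theorem IsChain.exists_nodup {R : α → α → Prop} : ∀ {l : List α}, l.IsChain R →
    ∃ l' ⊆ l, l'.IsChain R ∧ l'.Nodup ∧ l'.head? = l.head? ∧ l'.getLast? = l.getLast?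
  | [], _ => ⟨[], by simp⟩
  | a :: l, h => by
    obtain ⟨hal, hl⟩ := List.isChain_cons.1 h
    obtain ⟨l', hsub, hc, hnd, hhead, hlast⟩ := hl.exists_nodup
    by_cases ha : a ∈ l'
    · obtain ⟨s, t, rfl⟩ := append_of_mem ha
      refine ⟨a :: t, fun b hb => ?_, hc.suffix (suffix_append _ _),
        hnd.sublist (suffix_append _ _).sublist, rfl, ?_⟩
      · exact subset_cons_of_subset a hsub (mem_append_right s hb)
      · rw [getLast?_cons, getLast?_cons, ← hlast]
        simp [getLast?_cons]
    · exact ⟨a :: l', cons_subset_cons a hsub, List.isChain_cons.2 ⟨hhead ▸ hal, hc⟩,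
        nodup_cons.2 ⟨ha, hnd⟩, rfl, by simp [getLast?_cons, hlast]⟩

end List

namespace Relation

variable {α : Type*} {r s : α → α → Prop} {A B C X Y : Set α} {l : List α}

def IsWalk (r : α → α → Prop) (A B : Set α) (l : List α) : Prop :=
  l.IsChain r ∧ (∃ a ∈ A, l.head? = some a) ∧ ∃ b ∈ B, l.getLast? = some b

def Separates (r : α → α → Prop) (A B C : Set α) : Prop :=
  ∀ l, IsWalk r A B l → ∃ v ∈ l, v ∈ C

def HasTwoDisjointWalks (r : α → α → Prop) (A B : Set α) : Prop :=
  ∃ l₁ l₂, IsWalk r A B l₁ ∧ IsWalk r A B l₂ ∧ l₁.Disjoint l₂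

def deleteArc (r : α → α → Prop) (x y : α) : α → α → Prop :=
  fun a b => r a b ∧ ¬ (a = x ∧ b = y)

theorem IsWalk.mono (hrs : ∀ a b, r a b → s a b) (h : IsWalk r A B l) : IsWalk s A B l :=
  ⟨h.1.imp hrs, h.2⟩

theorem HasTwoDisjointWalks.mono (hrs : ∀ a b, r a b → s a b) (h : HasTwoDisjointWalks r A B) :
    HasTwoDisjointWalks s A B :=
  let ⟨l₁, l₂, h₁, h₂, hd⟩ := h
  ⟨l₁, l₂, h₁.mono hrs, h₂.mono hrs, hd⟩

theorem IsWalk.mem_of_target_singleton {c : α} (h : IsWalk r A {c} l) : c ∈ l := by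
  obtain ⟨b, rfl, hb⟩ := h.2.2
  exact List.mem_of_getLast? hb

theorem IsWalk.mem_of_source_singleton {c : α} (h : IsWalk r {c} B l) : c ∈ l := by
  obtain ⟨a, rfl, ha⟩ := h.2.1
  exact List.mem_of_head? ha

theorem IsWalk.splice {v : α} {p p' t t' : List α} (hp : IsWalk r A X (p ++ v :: p'))
    (ht : IsWalk r Y B (t ++ v :: t')) : IsWalk r A B (p ++ v :: t') := by
  obtain ⟨hpc, ⟨a, ha, hpa⟩, -⟩ := hp
  obtain ⟨htc, -, ⟨b, hb, htb⟩⟩ := ht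
  refine ⟨List.isChain_append.2 ⟨hpc.left_of_append, htc.right_of_append, ?_⟩,
    ⟨a, ha, by simpa using hpa⟩, ⟨b, hb, by simpa using htb⟩⟩
  simpa using (List.isChain_append.1 hpc).2.2

theorem IsWalk.append {x y : α} {p t : List α} (hp : IsWalk r A {x} p) (ht : IsWalk r {y} B t)
    (hxy : r x y) : IsWalk r A B (p ++ t) := by
  obtain ⟨hpc, ⟨a, ha, hpa⟩, ⟨_, rfl, hpx⟩⟩ := hp
  obtain ⟨htc, ⟨_, rfl, hty⟩, ⟨b, hb, htb⟩⟩ := ht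
  refine ⟨List.isChain_append.2 ⟨hpc, htc, by simp_all⟩, ⟨a, ha, ?_⟩, ⟨b, hb, ?_⟩⟩
  · simp [hpa]
  · simp [htb]

theorem Separates.disjoint {c : α} {p t q u : List α} (hc : Separates r A B {c})
    (hp : IsWalk r A X p) (ht : IsWalk r Y B t) (hq : q <+: p) (hu : u <:+ t)
    (hcq : c ∉ q) (hcu : c ∉ u) : q.Disjoint u := by
  intro v hvq hvu
  obtain ⟨q₁, q₂, rfl⟩ := List.append_of_mem hvq
  obtain ⟨u₁, u₂, rfl⟩ := List.append_of_mem hvu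
  obtain ⟨p', rfl⟩ := hq
  obtain ⟨t', rfl⟩ := hu
  have hw : IsWalk r A B (q₁ ++ v :: u₂) :=
    IsWalk.splice (p' := q₂ ++ p') (t := t' ++ u₁) (by simpa using hp) (by simpa using ht)
  obtain ⟨w, hw, rfl⟩ := hc _ hw
  simp only [List.mem_append, List.mem_cons] at hw hcq hcu
  tauto

theorem isChain_deleteArc_of_notMem {x y z : α} (h : l.IsChain r) (hz : z ∉ l)
    (hzxy : z = x ∨ z = y) : l.IsChain (deleteArc r x y) :=
  h.imp_of_mem_imp fun _ _ ha hb hab =>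
    ⟨hab, by rintro ⟨rfl, rfl⟩; rcases hzxy with rfl | rfl <;> contradiction⟩

theorem Separates.insert_of_deleteArc {x y z : α} (h : Separates (deleteArc r x y) A B C)
    (hzxy : z = x ∨ z = y) : Separates r A B (insert z C) := by
  intro l hl
  by_cases hz : z ∈ l
  · exact ⟨z, hz, Set.mem_insert z C⟩
  · obtain ⟨v, hv, hvC⟩ := h l ⟨isChain_deleteArc_of_notMem hl.1 hz hzxy, hl.2⟩
    exact ⟨v, hv, Set.mem_insert_of_mem z hvC⟩

theorem Separates.of_deleteArc_source {x y : α} {T : Set α} (hT : Separates r A B T) (hx : x ∈ T)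
    (h : Separates (deleteArc r x y) A T C) : Separates r A B C := by
  intro l hl
  obtain ⟨s, z, t, rfl, hz, hs⟩ := List.exists_eq_append_cons_first (hT l hl)
  have hpre : s ++ [z] <+: s ++ z :: t := ⟨t, by simp⟩
  have hwalk : IsWalk (deleteArc r x y) A T (s ++ [z]) := by
    obtain ⟨hc, ⟨a, ha, hla⟩, -⟩ := hl
    have hxs : x ∉ s := fun hxs => hs x hxs hx
    have hsz := List.isChain_append.1 (hc.prefix hpre)
    refine ⟨List.isChain_append.2 ⟨isChain_deleteArc_of_notMem hsz.1 hxs (.inl rfl),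
      List.isChain_singleton z, fun a ha b hb => ⟨hsz.2.2 a ha b hb, ?_⟩⟩,
      ⟨a, ha, by simpa using hla⟩, ⟨z, hz, by simp⟩⟩
    rintro ⟨rfl, -⟩
    exact hxs (List.mem_of_getLast? ha)
  obtain ⟨v, hv, hvC⟩ := h _ hwalk
  exact ⟨v, hpre.subset hv, hvC⟩

theorem Separates.of_deleteArc_target {x y : α} {T : Set α} (hT : Separates r A B T) (hy : y ∈ T)
    (h : Separates (deleteArc r x y) T B C) : Separates r A B C := by
  intro l hl
  obtain ⟨s, z, t, rfl, hz, ht⟩ := List.exists_eq_append_cons_last (hT l hl)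
  have hwalk : IsWalk (deleteArc r x y) T B (z :: t) := by
    obtain ⟨hc, -, ⟨b, hb, hlb⟩⟩ := hl
    refine ⟨(hc.suffix ⟨s, rfl⟩).imp_of_mem_tail_imp fun a b _ hb hab => ⟨hab, ?_⟩,
      ⟨z, hz, rfl⟩, ⟨b, hb, by simpa using hlb⟩⟩
    rintro ⟨-, rfl⟩
    exact ht b hb hy
  obtain ⟨v, hv, hvC⟩ := h _ hwalk
  exact ⟨v, List.mem_append_right s hv, hvC⟩

theorem isWalk_singleton {a : α} (hA : a ∈ A) (hB : a ∈ B) : IsWalk r A B [a] :=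
  ⟨List.isChain_singleton a, ⟨a, hA, rfl⟩, ⟨a, hB, rfl⟩⟩

theorem IsWalk.exists_rel (h : IsWalk r A B l) (hAB : Disjoint A B) : ∃ x y, r x y := by
  obtain ⟨hc, ⟨a, ha, hla⟩, ⟨b, hb, hlb⟩⟩ := h
  match l, hc, hla, hlb with
  | [_], _, hla, hlb =>
    simp only [List.head?_cons, List.getLast?_singleton, Option.some.injEq] at hla hlb
    exact absurd (hla ▸ hlb ▸ hb) (Set.disjoint_left.1 hAB ha)
  | x :: y :: _, hc, _, _ => exact ⟨x, y, (List.isChain_cons_cons.1 hc).1⟩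

theorem ncard_deleteArc_lt [Finite α] {x y : α} (hxy : r x y) :
    {p : α × α | deleteArc r x y p.1 p.2}.ncard < {p : α × α | r p.1 p.2}.ncard :=
  Set.ncard_lt_ncard ⟨fun _ hp => hp.1,
    fun h => (h (show (x, y) ∈ {p : α × α | r p.1 p.2} from hxy)).2 ⟨rfl, rfl⟩⟩

theorem HasTwoDisjointWalks.exists_split_target {c x : α} (h : HasTwoDisjointWalks r A {c, x}) :
    ∃ pc px, IsWalk r A {c} pc ∧ IsWalk r A {x} px ∧ pc.Disjoint px := by
  obtain ⟨l₁, l₂, ⟨h₁c, h₁a, b₁, hb₁, hl₁⟩, ⟨h₂c, h₂a, b₂, hb₂, hl₂⟩, hd⟩ := h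
  have hb : b₁ ≠ b₂ := fun h => hd (List.mem_of_getLast? hl₁) (h ▸ List.mem_of_getLast? hl₂)
  rcases hb₁ with rfl | rfl <;> rcases hb₂ with rfl | rfl
  · exact absurd rfl hb
  · exact ⟨l₁, l₂, ⟨h₁c, h₁a, _, rfl, hl₁⟩, ⟨h₂c, h₂a, _, rfl, hl₂⟩, hd⟩
  · exact ⟨l₂, l₁, ⟨h₂c, h₂a, _, rfl, hl₂⟩, ⟨h₁c, h₁a, _, rfl, hl₁⟩, hd.symm⟩
  · exact absurd rfl hb

theorem HasTwoDisjointWalks.exists_split_source {c y : α} (h : HasTwoDisjointWalks r {c, y} B) :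
    ∃ tc ty, IsWalk r {c} B tc ∧ IsWalk r {y} B ty ∧ tc.Disjoint ty := by
  obtain ⟨l₁, l₂, ⟨h₁c, ⟨a₁, ha₁, hl₁⟩, h₁b⟩, ⟨h₂c, ⟨a₂, ha₂, hl₂⟩, h₂b⟩, hd⟩ := h
  have ha : a₁ ≠ a₂ := fun h => hd (List.mem_of_head? hl₁) (h ▸ List.mem_of_head? hl₂)
  rcases ha₁ with rfl | rfl <;> rcases ha₂ with rfl | rfl
  · exact absurd rfl ha
  · exact ⟨l₁, l₂, ⟨h₁c, ⟨_, rfl, hl₁⟩, h₁b⟩, ⟨h₂c, ⟨_, rfl, hl₂⟩, h₂b⟩, hd⟩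
  · exact ⟨l₂, l₁, ⟨h₂c, ⟨_, rfl, hl₂⟩, h₂b⟩, ⟨h₁c, ⟨_, rfl, hl₁⟩, h₁b⟩, hd.symm⟩
  · exact absurd rfl ha

theorem hasTwoDisjointWalks_of_split {r' : α → α → Prop} {c x y : α} {pc px tc ty : List α}
    (hle : ∀ a b, r' a b → r a b) (hxy : r x y) (hc : Separates r' A B {c})
    (hpc : IsWalk r' A {c} pc) (hpx : IsWalk r' A {x} px) (hp : pc.Disjoint px)
    (htc : IsWalk r' {c} B tc) (hty : IsWalk r' {y} B ty) (ht : tc.Disjoint ty) :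
    HasTwoDisjointWalks r A B := by
  have hcpx : c ∉ px := hp hpc.mem_of_target_singleton
  have hcty : c ∉ ty := ht htc.mem_of_source_singleton
  obtain ⟨q, c', pc', rfl, hc', hq⟩ := List.exists_eq_append_cons_first (p := (c = ·))
    ⟨c, hpc.mem_of_target_singleton, rfl⟩
  subst hc'
  obtain ⟨tc', c', u, rfl, hc', hu⟩ := List.exists_eq_append_cons_last (p := (c = ·))
    ⟨c, htc.mem_of_source_singleton, rfl⟩
  subst hc'
  have hqty : q.Disjoint ty :=
    hc.disjoint hpc hty ⟨c :: pc', rfl⟩ (List.suffix_refl ty) (fun h => hq _ h rfl) hcty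
  have hpxu : px.Disjoint u :=
    hc.disjoint hpx htc (List.prefix_refl px) ⟨tc' ++ [c], by simp⟩ hcpx (fun h => hu _ h rfl)
  refine ⟨_, _, (hpc.splice htc).mono hle, (hpx.mono hle).append (hty.mono hle) hxy, ?_⟩
  intro v hv₁ hv₂
  simp only [List.mem_append, List.mem_cons] at hv₁ hv₂
  rcases hv₁ with hvq | rfl | hvu <;> rcases hv₂ with hvpx | hvty
  · exact hp (List.mem_append_left _ hvq) hvpx
  · exact hqty hvq hvty
  · exact hcpx hvpx
  · exact hcty hvty
  · exact hpxu hvpx hvu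
  · exact ht (List.mem_append_right _ (List.mem_cons_of_mem _ hvu)) hvty

theorem hasTwoDisjointWalks_of_mem_inter {v : α} (hvA : v ∈ A) (hvB : v ∈ B)
    (h : ¬ Separates r A B {v}) : HasTwoDisjointWalks r A B := by
  simp only [Separates, Set.mem_singleton_iff, exists_eq_right, not_forall] at h
  obtain ⟨l, hl, hvl⟩ := h
  exact ⟨l, [v], hl, isWalk_singleton hvA hvB, by simpa using hvl⟩

theorem hasTwoDisjointWalks_of_deleteArc {x y : α} (hxy : r x y)
    (ih : ∀ A B, (∀ c, ¬ Separates (deleteArc r x y) A B {c}) →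
      HasTwoDisjointWalks (deleteArc r x y) A B)
    (h : ∀ c, ¬ Separates r A B {c}) : HasTwoDisjointWalks r A B := by
  have hle : ∀ a b, deleteArc r x y a b → r a b := fun _ _ hab => hab.1
  by_cases hsep : ∃ c, Separates (deleteArc r x y) A B {c}
  · obtain ⟨c, hc⟩ := hsep
    have hx : Separates r A B {x, c} := hc.insert_of_deleteArc (.inl rfl)
    have hy : Separates r A B {y, c} := hc.insert_of_deleteArc (.inr rfl)
    obtain ⟨px, pc, hpx, hpc, hp⟩ := (ih A {x, c} fun d hd =>
      h d (hx.of_deleteArc_source (.inl rfl) hd)).exists_split_target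
    obtain ⟨ty, tc, hty, htc, ht⟩ := (ih {y, c} B fun d hd =>
      h d (hy.of_deleteArc_target (.inl rfl) hd)).exists_split_source
    exact hasTwoDisjointWalks_of_split hle hxy hc hpc hpx hp.symm htc hty ht.symm
  · exact (ih A B (not_exists.1 hsep)).mono hle

theorem hasTwoDisjointWalks_of_forall_not_separates [Finite α] [Nonempty α]
    {r : α → α → Prop} {A B : Set α} (h : ∀ c, ¬ Separates r A B {c}) :
    HasTwoDisjointWalks r A B := by
  by_cases hAB : Disjoint A B
  · have hwalk := h (Classical.arbitrary α)
    simp only [Separates, not_forall] at hwalk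
    obtain ⟨l, hl, -⟩ := hwalk
    obtain ⟨x, y, hxy⟩ := hl.exists_rel hAB
    exact hasTwoDisjointWalks_of_deleteArc hxy
      (fun _ _ h' => hasTwoDisjointWalks_of_forall_not_separates h') h
  · obtain ⟨v, hvA, hvB⟩ := Set.not_disjoint_iff.1 hAB
    exact hasTwoDisjointWalks_of_mem_inter hvA hvB (h v)
termination_by {p : α × α | r p.1 p.2}.ncard
decreasing_by exact ncard_deleteArc_lt hxy

theorem Separates.exists_closed {c : α} (h : Separates r A B {c}) :
    ∃ R : Set α, A \ {c} ⊆ R ∧ Disjoint R B ∧ c ∉ R ∧ ∀ a ∈ R, ∀ b, r a b → b ≠ c → b ∈ R := by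
  refine ⟨{b | ∃ l, IsWalk r A {b} l ∧ c ∉ l}, ?_, ?_, ?_, ?_⟩
  · rintro a ⟨ha, hac⟩
    exact ⟨[a], isWalk_singleton ha rfl, by simpa [eq_comm] using hac⟩
  · refine Set.disjoint_left.2 fun b ⟨l, hl, hcl⟩ hb => hcl ?_
    obtain ⟨_, rfl, hlb⟩ := hl.2.2
    obtain ⟨v, hv, rfl⟩ := h l ⟨hl.1, hl.2.1, ⟨_, hb, hlb⟩⟩
    exact hv
  · rintro ⟨l, hl, hcl⟩
    exact hcl hl.mem_of_target_singleton
  · rintro a ⟨l, hl, hcl⟩ b hab hbc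
    exact ⟨l ++ [b], hl.append (isWalk_singleton rfl rfl) hab, by simp [hcl, hbc.symm]⟩

end Relation

section Hypergraph

open Relation

variable {V : Type*} {E : Finset (Finset V)}

def incidenceRel (E : Finset (Finset V)) : V ⊕ Finset V → V ⊕ Finset V → Prop
  | .inl v, .inr e | .inr e, .inl v => e ∈ E ∧ v ∈ e
  | _, _ => False

def IsBergePath (E : Finset (Finset V)) {m : ℕ} (w : Fin (m + 1) → V) (e : Fin m → Finset V) :
    Prop :=
  Function.Injective w ∧ Function.Injective e ∧
    ∀ i, e i ∈ E ∧ w i.castSucc ∈ e i ∧ w i.succ ∈ e i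

theorem IsBergePath.cons {m : ℕ} {w : Fin (m + 1) → V} {e : Fin m → Finset V}
    (h : IsBergePath E w e) {u : V} {f : Finset V} (hu : u ∉ Set.range w) (hf : f ∉ Set.range e)
    (hfE : f ∈ E) (huf : u ∈ f) (hwf : w 0 ∈ f) :
    IsBergePath E (Fin.cons u w : Fin (m + 2) → V) (Fin.cons f e) := by
  refine ⟨Fin.cons_injective_iff.2 ⟨hu, h.1⟩, Fin.cons_injective_iff.2 ⟨hf, h.2.1⟩,
    Fin.cases ⟨hfE, huf, hwf⟩ fun i => ?_⟩
  simpa [← Fin.succ_castSucc] using h.2.2 i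

theorem exists_isBergePath_of_isChain : ∀ {u v : V} {l : List (V ⊕ Finset V)},
    (.inl u :: l).IsChain (incidenceRel E) → (.inl u :: l).Nodup →
    (.inl u :: l).getLast? = some (.inl v) →
    ∃ (m : ℕ) (w : Fin (m + 1) → V) (e : Fin m → Finset V), IsBergePath E w e ∧
      w 0 = u ∧ w (Fin.last m) = v ∧ (∀ i, .inl (w i) ∈ .inl u :: l) ∧ ∀ i, .inr (e i) ∈ l
  | u, v, [], _, _, hv => ⟨0, fun _ => u, Fin.elim0,
      ⟨fun i j _ => Subsingleton.elim (α := Fin 1) i j, fun i => i.elim0, fun i => i.elim0⟩,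
      rfl, by simpa using hv, by simp, fun i => i.elim0⟩
  | _, _, .inl _ :: _, hc, _, _ => (List.isChain_cons_cons.1 hc).1.elim
  | _, _, [.inr _], _, _, hv => by simp at hv
  | _, _, .inr _ :: .inr _ :: _, hc, _, _ =>
      (List.isChain_cons_cons.1 (List.isChain_cons_cons.1 hc).2).1.elim
  | u, v, .inr f :: .inl u' :: l, hc, hnd, hv => by
    obtain ⟨⟨hfE, huf⟩, hc⟩ := List.isChain_cons_cons.1 hc
    obtain ⟨⟨-, hu'f⟩, hc⟩ := List.isChain_cons_cons.1 hc
    rw [List.nodup_cons, List.nodup_cons] at hnd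
    obtain ⟨hu, hf, hnd⟩ := hnd
    obtain ⟨m, w, e, hp, rfl, rfl, hw, he⟩ :=
      exists_isBergePath_of_isChain hc hnd (by simpa using hv)
    refine ⟨m + 1, Fin.cons u w, Fin.cons f e, hp.cons ?_ ?_ hfE huf hu'f, rfl, ?_, ?_, ?_⟩
    · rintro ⟨i, rfl⟩
      exact hu (List.mem_cons_of_mem _ (hw i))
    · rintro ⟨i, rfl⟩
      exact hf (List.mem_cons_of_mem _ (he i))
    · simp
    · exact Fin.cases (by simp) fun i => List.mem_cons_of_mem _ (List.mem_cons_of_mem _ (hw i))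
    · exact Fin.cases (by simp) fun i => List.mem_cons_of_mem _ (List.mem_cons_of_mem _ (he i))

theorem exists_isBergePath_of_isWalk {S T : Set V} {l : List (V ⊕ Finset V)}
    (h : IsWalk (incidenceRel E) (.inl '' S) (.inl '' T) l) :
    ∃ (m : ℕ) (w : Fin (m + 1) → V) (e : Fin m → Finset V), IsBergePath E w e ∧
      w 0 ∈ S ∧ w (Fin.last m) ∈ T ∧ (∀ i, .inl (w i) ∈ l) ∧ ∀ i, .inr (e i) ∈ l := by
  obtain ⟨l', hsub, hc, hnd, hhead, hlast⟩ := h.1.exists_nodup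
  obtain ⟨_, ⟨u, hu, rfl⟩, hlu⟩ := h.2.1
  obtain ⟨_, ⟨v, hv, rfl⟩, hlv⟩ := h.2.2
  obtain ⟨l'', rfl⟩ := List.head?_eq_some_iff.1 (hhead.trans hlu)
  obtain ⟨m, w, e, hp, rfl, rfl, hw, he⟩ := exists_isBergePath_of_isChain hc hnd (hlast.trans hlv)
  exact ⟨m, w, e, hp, hu, hv, fun i => hsub (hw i), fun i => hsub (List.mem_cons_of_mem _ (he i))⟩

theorem mem_of_mem_edge_of_closed {R : Set (V ⊕ Finset V)} {c : V ⊕ Finset V}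
    (hR : ∀ a ∈ R, ∀ b, incidenceRel E a b → b ≠ c → b ∈ R) {f : Finset V} (hf : f ∈ E)
    (hfc : .inr f ≠ c) {u u' : V} (hu : u ∈ f) (hu' : u' ∈ f) (huR : .inl u ∈ R)
    (hu'c : .inl u' ≠ c) : .inl u' ∈ R :=
  hR _ (hR _ huR (.inr f) ⟨hf, hu⟩ hfc) (.inl u') ⟨hf, hu'⟩ hu'c

theorem hCutVertex_of_separates {S T : Set V} {v : V}
    (h : Separates (incidenceRel E) (.inl '' S) (.inl '' T) {.inl v})
    (hS : ∃ s ∈ S, s ≠ v) (hT : ∃ t ∈ T, t ≠ v) : HCutVertex E v := by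
  obtain ⟨R, hSR, hRT, hvR, hR⟩ := h.exists_closed
  obtain ⟨s, hs, hsv⟩ := hS
  obtain ⟨t, ht, htv⟩ := hT
  refine ⟨{u | Sum.inl u ∈ R}, {u | u ≠ v ∧ Sum.inl u ∉ R},
    ⟨s, hSR ⟨⟨s, hs, rfl⟩, by simpa using hsv⟩⟩,
    ⟨t, htv, Set.disjoint_right.1 hRT ⟨t, ht, rfl⟩⟩,
    Set.disjoint_left.2 fun u hu hu' => hu'.2 hu, hvR, fun h => h.1 rfl,
    fun u => by by_cases u = v <;> by_cases .inl u ∈ R <;> simp_all, fun e he => ?_⟩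
  by_cases hex : ∃ u ∈ e, .inl u ∈ R
  · obtain ⟨u, hue, huR⟩ := hex
    refine .inl fun u' hu' => or_iff_not_imp_left.2 fun hu'v => ?_
    exact mem_of_mem_edge_of_closed hR he (by simp) hue hu' huR (by simpa using hu'v)
  · exact .inr fun u' hu' =>
      or_iff_not_imp_left.2 fun hu'v => ⟨hu'v, fun hu'R => hex ⟨u', hu', hu'R⟩⟩

theorem exists_split_of_separates_edge {S T : Set V} {e : Finset V}
    (h : Separates (incidenceRel E) (.inl '' S) (.inl '' T) {.inr e})
    (hS : S.Nonempty) (hT : T.Nonempty) :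
    ∃ V₁ : Set V, V₁.Nonempty ∧ V₁ᶜ.Nonempty ∧ ∀ f ∈ E, f ≠ e → ↑f ⊆ V₁ ∨ ↑f ⊆ V₁ᶜ := by
  obtain ⟨R, hSR, hRT, -, hR⟩ := h.exists_closed
  obtain ⟨s, hs⟩ := hS
  obtain ⟨t, ht⟩ := hT
  refine ⟨{u | Sum.inl u ∈ R}, ⟨s, hSR ⟨⟨s, hs, rfl⟩, by simp⟩⟩,
    ⟨t, Set.disjoint_right.1 hRT ⟨t, ht, rfl⟩⟩, fun f hf hfe => ?_⟩
  by_cases hex : ∃ u ∈ f, .inl u ∈ R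
  · obtain ⟨u, huf, huR⟩ := hex
    exact .inl fun u' hu' =>
      mem_of_mem_edge_of_closed hR hf (by simpa using hfe) huf hu' huR (by simp)
  · exact .inr fun u' hu' hu'R => hex ⟨u', hu', hu'R⟩

theorem HTwoConnected.not_separates {S T : Finset V} (h : HTwoConnected E) (hS : 2 ≤ S.card)
    (hT : 2 ≤ T.card) (c : V ⊕ Finset V) :
    ¬ Separates (incidenceRel E) (.inl '' ↑S) (.inl '' ↑T) {c} := by
  intro hc
  rcases c with v | e
  · exact h.2.1 v (hCutVertex_of_separates hc (S.exists_mem_ne hS v) (T.exists_mem_ne hT v))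
  · obtain ⟨V₁, hV₁, hV₁c, hsplit⟩ := exists_split_of_separates_edge hc
      (S.card_pos.1 (by omega)) (T.card_pos.1 (by omega))
    by_cases he : e ∈ E
    · exact h.2.2 e ⟨he, V₁, V₁ᶜ, hV₁, hV₁c, disjoint_compl_right, fun u => em _, hsplit⟩
    · exact h.1 ⟨V₁, hV₁, hV₁c, fun f hf => hsplit f hf (ne_of_mem_of_not_mem hf he)⟩

end Hypergraph

theorem two_disjoint_bergePaths_general {V : Type*} [Fintype V]
    (E : Finset (Finset V)) (h2conn : HTwoConnected E)
    (S₁ S₂ : Finset V)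
    (hS₁ : 2 ≤ S₁.card) (hS₂ : 2 ≤ S₂.card) :
    ∃ (m₁ m₂ : ℕ) (w₁ : Fin (m₁ + 1) → V) (e₁ : Fin m₁ → Finset V)
      (w₂ : Fin (m₂ + 1) → V) (e₂ : Fin m₂ → Finset V),
      Function.Injective w₁ ∧ Function.Injective e₁ ∧
      Function.Injective w₂ ∧ Function.Injective e₂ ∧
      (∀ i : Fin m₁, e₁ i ∈ E ∧ w₁ i.castSucc ∈ e₁ i ∧ w₁ i.succ ∈ e₁ i) ∧
      (∀ i : Fin m₂, e₂ i ∈ E ∧ w₂ i.castSucc ∈ e₂ i ∧ w₂ i.succ ∈ e₂ i) ∧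
      w₁ 0 ∈ S₁ ∧ w₁ (Fin.last m₁) ∈ S₂ ∧
      w₂ 0 ∈ S₁ ∧ w₂ (Fin.last m₂) ∈ S₂ ∧
      w₁ 0 ≠ w₂ 0 ∧ w₁ (Fin.last m₁) ≠ w₂ (Fin.last m₂) ∧
      (∀ i j, w₁ i ≠ w₂ j) ∧ (∀ i j, e₁ i ≠ e₂ j) := by
  obtain ⟨l₁, l₂, hl₁, hl₂, hd⟩ :=
    Relation.hasTwoDisjointWalks_of_forall_not_separates (h2conn.not_separates hS₁ hS₂)
  obtain ⟨m₁, w₁, e₁, ⟨hw₁, he₁, hadj₁⟩, hu₁, hv₁, hw₁l, he₁l⟩ := exists_isBergePath_of_isWalk hl₁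
  obtain ⟨m₂, w₂, e₂, ⟨hw₂, he₂, hadj₂⟩, hu₂, hv₂, hw₂l, he₂l⟩ := exists_isBergePath_of_isWalk hl₂
  have hw : ∀ i j, w₁ i ≠ w₂ j := fun i j h => hd (hw₁l i) (h ▸ hw₂l j)
  have he : ∀ i j, e₁ i ≠ e₂ j := fun i j h => hd (he₁l i) (h ▸ he₂l j)
  exact ⟨m₁, m₂, w₁, e₁, w₂, e₂, hw₁, he₁, hw₂, he₂, hadj₁, hadj₂, hu₁, hv₁, hu₂, hv₂,
    hw 0 0, hw _ _, hw, he⟩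

/-- In a 2-connected `r`-uniform hypergraph (`r ≥ 3`), for any two disjoint vertex
sets `S₁, S₂` of size at least 2, there are two Berge paths from `S₁` to `S₂`
sharing no defining vertices and no defining hyperedges. -/
theorem two_disjoint_bergePaths {V : Type*} [Fintype V]
    (E : Finset (Finset V)) (r : ℕ) (hr : r ≥ 3)
    (huniform : ∀ e ∈ E, e.card = r) (h2conn : HTwoConnected E)
    (S₁ S₂ : Finset V) (hdisj : Disjoint S₁ S₂)
    (hS₁ : 2 ≤ S₁.card) (hS₂ : 2 ≤ S₂.card) :
    ∃ (m₁ m₂ : ℕ) (w₁ : Fin (m₁ + 1) → V) (e₁ : Fin m₁ → Finset V)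
      (w₂ : Fin (m₂ + 1) → V) (e₂ : Fin m₂ → Finset V),
      Function.Injective w₁ ∧ Function.Injective e₁ ∧
      Function.Injective w₂ ∧ Function.Injective e₂ ∧
      (∀ i : Fin m₁, e₁ i ∈ E ∧ w₁ i.castSucc ∈ e₁ i ∧ w₁ i.succ ∈ e₁ i) ∧
      (∀ i : Fin m₂, e₂ i ∈ E ∧ w₂ i.castSucc ∈ e₂ i ∧ w₂ i.succ ∈ e₂ i) ∧
      w₁ 0 ∈ S₁ ∧ w₁ (Fin.last m₁) ∈ S₂ ∧
      w₂ 0 ∈ S₁ ∧ w₂ (Fin.last m₂) ∈ S₂ ∧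
      w₁ 0 ≠ w₂ 0 ∧ w₁ (Fin.last m₁) ≠ w₂ (Fin.last m₂) ∧
      (∀ i j, w₁ i ≠ w₂ j) ∧ (∀ i j, e₁ i ≠ e₂ j) :=
  two_disjoint_bergePaths_general E h2conn S₁ S₂ hS₁ hS₂
end

section
/- If a finite graph G is connected but not 2-connected and has at least 3 vertices, then G has at least two leaf blocks. -/
open SimpleGraph

/-- A block `B` is a leaf block if it contains at most one cut vertex of `G`. -/
def IsLeafBlock {V : Type*} (G : SimpleGraph V) (B : Set V) : Prop :=
  IsBlock G B ∧ {v ∈ B | IsCutVertex G v}.Subsingleton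

/-- A graph is 2-connected: connected, at least 3 vertices, and still connected after
deleting any single vertex. -/
def TwoConnected {V : Type*} [Fintype V] (G : SimpleGraph V) : Prop :=
  G.Connected ∧ 3 ≤ Fintype.card V ∧
    ∀ v : V, ((⊤ : G.Subgraph).deleteVerts {v}).coe.Connected

section ConnAPI

variable {V : Type*} {G : SimpleGraph V}

/-- Reachability within a vertex set `S`, via a walk whose support stays in `S`. -/
def Conn (G : SimpleGraph V) (S : Set V) (a b : V) : Prop :=
  ∃ w : G.Walk a b, ∀ x ∈ w.support, x ∈ S

namespace Conn

lemma mem_left {S : Set V} {a b : V} (h : Conn G S a b) : a ∈ S := by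
  obtain ⟨w, hw⟩ := h; exact hw a w.start_mem_support

lemma mem_right {S : Set V} {a b : V} (h : Conn G S a b) : b ∈ S := by
  obtain ⟨w, hw⟩ := h; exact hw b w.end_mem_support

protected lemma refl {S : Set V} {a : V} (ha : a ∈ S) : Conn G S a a :=
  ⟨Walk.nil, by simp [ha]⟩

protected lemma symm {S : Set V} {a b : V} (h : Conn G S a b) : Conn G S b a := by
  obtain ⟨w, hw⟩ := h
  exact ⟨w.reverse, by simpa using hw⟩

protected lemma trans {S : Set V} {a b c : V} (h1 : Conn G S a b) (h2 : Conn G S b c) :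
    Conn G S a c := by
  obtain ⟨w1, hw1⟩ := h1; obtain ⟨w2, hw2⟩ := h2
  refine ⟨w1.append w2, fun x hx => ?_⟩
  rcases (Walk.mem_support_append_iff _ _).1 hx with h | h
  · exact hw1 x h
  · exact hw2 x h

lemma mono {S T : Set V} {a b : V} (hST : S ⊆ T) (h : Conn G S a b) : Conn G T a b := by
  obtain ⟨w, hw⟩ := h; exact ⟨w, fun x hx => hST (hw x hx)⟩

lemma of_adj {S : Set V} {a b : V} (ha : a ∈ S) (hb : b ∈ S) (h : G.Adj a b) :
    Conn G S a b := ⟨Walk.cons h Walk.nil, by simp [ha, hb]⟩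

end Conn

lemma reachable_induce_of_walk {S : Set V} {a b : V} (w : G.Walk a b)
    (hw : ∀ x ∈ w.support, x ∈ S) (ha : a ∈ S) (hb : b ∈ S) :
    (G.induce S).Reachable ⟨a, ha⟩ ⟨b, hb⟩ := by
  induction w with
  | nil => exact Reachable.refl _
  | @cons u c d hadj p ih =>
    have hc : c ∈ S := hw c (by simp)
    have h1 : (G.induce S).Adj ⟨u, ha⟩ ⟨c, hc⟩ := by simpa using hadj
    exact h1.reachable.trans (ih (fun x hx => hw x (by simp [hx])) hc hb)

lemma conn_of_reachable_induce {S : Set V} {a b : ↥S}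
    (h : (G.induce S).Reachable a b) : Conn G S ↑a ↑b := by
  obtain ⟨w⟩ := h
  induction w with
  | nil => exact Conn.refl (Subtype.mem _)
  | @cons u c d hadj p ih =>
    have : G.Adj ↑u ↑c := by simpa using hadj
    exact (Conn.of_adj u.2 c.2 this).trans ih

lemma preconnected_induce_iff_conn {S : Set V} :
    (G.induce S).Preconnected ↔ ∀ a ∈ S, ∀ b ∈ S, Conn G S a b := by
  constructor
  · intro h a ha b hb
    exact conn_of_reachable_induce (h ⟨a, ha⟩ ⟨b, hb⟩)
  · intro h x y
    obtain ⟨w, hw⟩ := h x x.2 y y.2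
    exact reachable_induce_of_walk w hw x.2 y.2

lemma connected_induce_iff_conn {S : Set V} :
    (G.induce S).Connected ↔ S.Nonempty ∧ ∀ a ∈ S, ∀ b ∈ S, Conn G S a b := by
  rw [connected_iff, preconnected_induce_iff_conn, Set.nonempty_coe_sort, and_comm]

/-- A walk from inside `A` to outside `A` has a crossing edge whose endpoints are in `S`. -/
lemma exists_crossing {S A : Set V} {a b : V} (h : Conn G S a b) (ha : a ∈ A) (hb : b ∉ A) :
    ∃ p q, p ∈ A ∧ q ∉ A ∧ G.Adj p q ∧ p ∈ S ∧ q ∈ S := by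
  obtain ⟨w, hw⟩ := h
  induction w with
  | nil => exact absurd ha hb
  | @cons u c d hadj p ih =>
    by_cases hc : c ∈ A
    · exact ih hc hb (fun x hx => hw x (by simp [hx]))
    · exact ⟨u, c, ha, hc, hadj, hw u (by simp), hw c (by simp)⟩

/-- Collapsing a component `K` hanging off the rest: a walk to `w` from outside `K`
can avoid `K`. -/
lemma conn_collapse {S K : Set V} {w x : V} (hwK : w ∉ K)
    (hcl : ∀ k ∈ K, ∀ y ∈ S, y ≠ w → G.Adj k y → y ∈ K)
    (h : Conn G S x w) (hx : x ∉ K) : Conn G (S \ K) x w := by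
  obtain ⟨p, hp⟩ := h
  induction p with
  | nil => exact Conn.refl ⟨hp _ (by simp), hwK⟩
  | @cons u c d hadj q ih =>
    by_cases hy : c ∈ K
    · rcases eq_or_ne u d with rfl | hne
      · exact Conn.refl ⟨hp _ (by simp), hx⟩
      · exact absurd (hcl c hy u (hp _ (by simp)) hne hadj.symm) hx
    · obtain ⟨q', hq'⟩ := ih hwK hcl hy (fun z hz => hp z (by simp [hz]))
      refine ⟨Walk.cons hadj q', ?_⟩
      intro z hz
      simp only [Walk.support_cons, List.mem_cons] at hz
      rcases hz with rfl | hz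
      · exact ⟨hp _ (by simp), hx⟩
      · exact hq' z hz

/-- Every vertex connected to `a` within `S` is connected within the component of `a`. -/
lemma conn_component {S : Set V} {a x : V} (h : Conn G S a x) :
    Conn G {y ∈ S | Conn G S a y} a x := by
  classical
  obtain ⟨w, hw⟩ := h
  exact ⟨w, fun z hz => ⟨hw z hz,
    ⟨w.takeUntil z hz, fun u hu => hw u (Walk.support_takeUntil_subset _ hz hu)⟩⟩⟩

end ConnAPI

section Main

variable {V : Type*} {G : SimpleGraph V}

lemma exists_leaf_block [Fintype V] :
    ∀ (n : ℕ) (A : Set V) (v : V), A.ncard ≤ n → v ∈ A →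
      (∃ a ∈ A, a ≠ v) →
      (∀ a ∈ A, ∀ b ∈ A, Conn G A a b) →
      (∀ a ∈ A, a ≠ v → ∀ y, G.Adj a y → y ∈ A) →
      (∀ a ∈ (Aᶜ ∪ {v} : Set V), ∀ b ∈ (Aᶜ ∪ {v} : Set V), Conn G (Aᶜ ∪ {v}) a b) →
      ∃ B, B ⊆ A ∧ IsLeafBlock G B ∧ ∃ x ∈ B, ∃ y ∈ B, x ≠ y := by
  intro n
  induction n with
  | zero =>
    intro A v hn hv _ _ _ _
    have hA : A = ∅ := Set.ncard_eq_zero (Set.toFinite A) |>.mp (Nat.le_zero.mp hn)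
    exact absurd (hA ▸ hv) (Set.notMem_empty v)
  | succ n ih =>
    intro A v hn hv hA2 hconnA hclosed hout
    by_cases hcut : ∀ w ∈ A, ∀ a ∈ A \ {w}, ∀ b ∈ A \ {w}, Conn G (A \ {w}) a b
    · -- A itself is a leaf block
      obtain ⟨a, ha, hav⟩ := hA2
      refine ⟨A, subset_rfl, ⟨⟨⟨v, hv⟩, ?_, ?_, ?_⟩, ?_⟩, a, ha, v, hv, hav⟩
      · rw [connected_induce_iff_conn]; exact ⟨⟨v, hv⟩, hconnA⟩
      · intro w hw; rw [preconnected_induce_iff_conn]; exact hcut w hw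
      · -- maximality
        intro C hAC hCne hCconn hCdel x hx
        by_contra hxA
        have hxv : x ≠ v := fun h => hxA (h ▸ hv)
        have hconnC : Conn G (C \ {v}) a x := by
          by_cases hvC : v ∈ C
          · exact (preconnected_induce_iff_conn.mp (hCdel v hvC)) a ⟨hAC ha, hav⟩ x ⟨hx, hxv⟩
          · rw [Set.diff_singleton_eq_self hvC]
            exact (connected_induce_iff_conn.mp hCconn).2 a (hAC ha) x hx
        obtain ⟨p, q, hpA, hqA, hadj, hpS, _⟩ := exists_crossing hconnC ha hxA
        exact hqA (hclosed p hpA (fun h => hpS.2 (by simp [h])) q hadj)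
      · -- at most one cut vertex: every cut vertex of G in A equals v
        have key : ∀ w ∈ A, IsCutVertex G w → w = v := by
          intro w hw hcutw
          by_contra hwv
          apply hcutw
          rw [preconnected_induce_iff_conn]
          have haux : ∀ x ∈ ({w}ᶜ : Set V), Conn G ({w}ᶜ : Set V) x v := by
            intro x hx
            by_cases hxA : x ∈ A
            · have hvw : v ∈ A \ {w} := ⟨hv, fun h => hwv (Set.mem_singleton_iff.mp h).symm⟩
              exact (hcut w hw x ⟨hxA, hx⟩ v hvw).mono (fun z hz => hz.2)
            · refine (hout x (Or.inl hxA) v (Or.inr rfl)).mono ?_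
              rintro z (hz | rfl)
              · intro h
                exact hz (Set.mem_singleton_iff.mp h ▸ hw)
              · intro h
                exact hwv (Set.mem_singleton_iff.mp h).symm
          intro x hx y hy
          exact (haux x hx).trans (haux y hy).symm
        intro x hx y hy
        rw [key x hx.1 hx.2, key y hy.1 hy.2]
    · -- recurse into a component hanging off a cut vertex w of A
      push_neg at hcut
      obtain ⟨w, hw, a, ha, b, hb, hab⟩ := hcut
      -- choose a base point a' whose component misses v, and a point c outside it
      have hchoice : ∃ a' ∈ A \ {w}, ∃ c ∈ A \ {w},
          v ∉ {y ∈ A \ {w} | Conn G (A \ {w}) a' y} ∧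
          c ∉ {y ∈ A \ {w} | Conn G (A \ {w}) a' y} := by
        rcases eq_or_ne w v with rfl | hwv
        · exact ⟨a, ha, b, hb, fun h => h.1.2 rfl, fun h => hab h.2⟩
        · by_cases hav : Conn G (A \ {w}) a v
          · exact ⟨b, hb, a, ha, fun h => hab (hav.trans h.2.symm),
              fun h => hab h.2.symm⟩
          · exact ⟨a, ha, b, hb, fun h => hav h.2, fun h => hab h.2⟩
      obtain ⟨a', ha', c, hc, hvK, hcK⟩ := hchoice
      set K := {y ∈ A \ {w} | Conn G (A \ {w}) a' y} with hKdef
      have ha'K : a' ∈ K := ⟨ha', Conn.refl ha'⟩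
      have hKsub : K ⊆ A \ {w} := fun z hz => hz.1
      have hwK : w ∉ K := fun h => (hKsub h).2 rfl
      have hKcl : ∀ k ∈ K, ∀ y ∈ A, y ≠ w → G.Adj k y → y ∈ K := by
        intro k hk y hyA hyw hadj
        exact ⟨⟨hyA, hyw⟩, hk.2.trans (Conn.of_adj hk.1 ⟨hyA, hyw⟩ hadj)⟩
      -- w is adjacent to some p ∈ K
      obtain ⟨p, q, hpK, hqK, hadj, hpA, hqA⟩ :=
        exists_crossing (hconnA a' ha'.1 w hw) ha'K hwK
      have hqw : q = w := by
        by_contra hne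
        exact hqK (hKcl p hpK q hqA hne hadj)
      subst hqw
      set A' : Set V := K ∪ {q} with hA'def
      have hA'sub : A' ⊆ A := by
        rintro z (hz | rfl)
        · exact (hKsub hz).1
        · exact hw
      have hqA' : q ∈ A' := Or.inr rfl
      have hpA' : p ∈ A' := Or.inl hpK
      -- connectivity of A'
      have hKA' : K ⊆ A' := fun z hz => Or.inl hz
      have h1 : Conn G A' a' q :=
        ((conn_component hpK.2).mono hKA').trans (Conn.of_adj hpA' hqA' hadj)
      have haux : ∀ x ∈ A', Conn G A' x q := by
        rintro x (hxK | rfl)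
        · exact ((conn_component hxK.2).mono hKA').symm.trans h1
        · exact Conn.refl hqA'
      have hconnA' : ∀ x ∈ A', ∀ y ∈ A', Conn G A' x y :=
        fun x hx y hy => (haux x hx).trans (haux y hy).symm
      -- closedness of A' away from q
      have hclosed' : ∀ x ∈ A', x ≠ q → ∀ y, G.Adj x y → y ∈ A' := by
        rintro x (hxK | rfl) hxq y hady
        · have hxv : x ≠ v := fun h => hvK (h ▸ hxK)
          have hyA : y ∈ A := hclosed x (hKsub hxK).1 hxv y hady
          rcases eq_or_ne y q with rfl | hyq
          · exact Or.inr rfl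
          · exact Or.inl (hKcl x hxK y hyA hyq hady)
        · exact absurd rfl hxq
      -- the complement side
      have hT : (A'ᶜ ∪ {q} : Set V) = Kᶜ := by
        ext z
        by_cases hz : z = q
        · subst hz; simp [hwK]
        · simp only [Set.mem_union, Set.mem_compl_iff, Set.mem_singleton_iff, hA'def,
            Set.mem_union, hz, or_false]
      have hauxc : ∀ x ∈ (Kᶜ : Set V), Conn G (Kᶜ : Set V) x q := by
        intro x hx
        by_cases hxA : x ∈ A
        · exact (conn_collapse hwK (fun k hk y hy => hKcl k hk y hy) (hconnA x hxA q hw) hx).mono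
            (fun z hz => hz.2)
        · have hxv : Conn G (Aᶜ ∪ {v} : Set V) x v := hout x (Or.inl hxA) v (Or.inr rfl)
          have hsub : (Aᶜ ∪ {v} : Set V) ⊆ Kᶜ := by
            rintro z (hz | rfl)
            · exact fun h => hz (hKsub h).1
            · exact hvK
          refine (hxv.mono hsub).trans ?_
          exact (conn_collapse hwK (fun k hk y hy => hKcl k hk y hy)
            (hconnA v hv q hw) hvK).mono (fun z hz => hz.2)
      have hout' : ∀ x ∈ (A'ᶜ ∪ {q} : Set V), ∀ y ∈ (A'ᶜ ∪ {q} : Set V),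
          Conn G (A'ᶜ ∪ {q} : Set V) x y := by
        rw [hT]
        exact fun x hx y hy => (hauxc x hx).trans (hauxc y hy).symm
      -- cardinality decrease
      have hlt : A'.ncard < A.ncard := by
        refine Set.ncard_lt_ncard ?_ (Set.toFinite A)
        rw [Set.ssubset_iff_of_subset hA'sub]
        refine ⟨c, hc.1, ?_⟩
        rintro (h | rfl)
        · exact hcK h
        · exact hc.2 rfl
      have hle : A'.ncard ≤ n := by omega
      obtain ⟨B, hBA', hB, x, hxB, y, hyB, hxy⟩ := ih A' q hle hqA'
        ⟨a', Or.inl ha'K, ha'.2⟩ hconnA' hclosed' hout'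
      exact ⟨B, hBA'.trans hA'sub, hB, x, hxB, y, hyB, hxy⟩

end Main

/-- A connected graph on at least 3 vertices which is not 2-connected has at least
two leaf blocks. -/
theorem two_leaf_blocks {V : Type*} [Fintype V] (G : SimpleGraph V)
    (hconn : G.Connected) (hcard : 3 ≤ Fintype.card V)
    (hnot2 : ¬ TwoConnected G) :
    ∃ B₁ B₂ : Set V, B₁ ≠ B₂ ∧ IsLeafBlock G B₁ ∧ IsLeafBlock G B₂ := by
  classical
  rw [TwoConnected] at hnot2
  push_neg at hnot2
  obtain ⟨v, hv⟩ := hnot2 hconn hcard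
  have hdel : ¬ (G.induce ({v}ᶜ : Set V)).Connected := by
    intro h
    apply hv
    have he : ((⊤ : G.Subgraph).deleteVerts {v}) = (⊤ : G.Subgraph).induce ({v}ᶜ : Set V) := by
      unfold SimpleGraph.Subgraph.deleteVerts
      congr 1
      simp [Set.compl_eq_univ_diff]
    rw [he]
    exact SimpleGraph.Subgraph.connected_iff'.mp (connected_induce_iff.mp h)
  have hne : ({v}ᶜ : Set V).Nonempty := by
    obtain ⟨u, hu⟩ := Fintype.exists_ne_of_one_lt_card (by omega) v
    exact ⟨u, hu⟩
  rw [connected_induce_iff_conn] at hdel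
  push_neg at hdel
  obtain ⟨a, ha, b, hb, hab⟩ := hdel hne
  set K := {y ∈ ({v}ᶜ : Set V) | Conn G ({v}ᶜ : Set V) a y} with hKdef
  have haK : a ∈ K := ⟨ha, Conn.refl ha⟩
  have hKsub : K ⊆ ({v}ᶜ : Set V) := fun z hz => hz.1
  have hvK : v ∉ K := fun h => (hKsub h) rfl
  have hbK : b ∉ K := fun h => hab h.2
  have hKcl : ∀ k ∈ K, ∀ y, y ≠ v → G.Adj k y → y ∈ K := by
    intro k hk y hyv hadj
    exact ⟨hyv, hk.2.trans (Conn.of_adj hk.1 hyv hadj)⟩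
  have hconnG : ∀ x y : V, Conn G Set.univ x y :=
    fun x y => ⟨(hconn x y).some, fun _ _ => trivial⟩
  obtain ⟨p, q, hpK, hqK, hadj, -, -⟩ := exists_crossing (hconnG a v) haK hvK
  have hq : q = v := by
    by_contra hne'
    exact hqK (hKcl p hpK q hne' hadj)
  subst hq
  have hcb : ∀ S : Set V, S.ncard ≤ Fintype.card V := fun S => by
    simpa [Set.ncard_univ, Nat.card_eq_fintype_card] using
      Set.ncard_le_ncard (Set.subset_univ S) Set.finite_univ
  -- the side A₁ = K ∪ {v}
  have hKA1 : K ⊆ K ∪ {q} := Set.subset_union_left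
  have h1 : Conn G (K ∪ {q}) a q :=
    ((conn_component hpK.2).mono hKA1).trans (Conn.of_adj (Or.inl hpK) (Or.inr rfl) hadj)
  have haux1 : ∀ x ∈ (K ∪ {q} : Set V), Conn G (K ∪ {q}) x q := by
    rintro x (hxK | rfl)
    · exact ((conn_component hxK.2).mono hKA1).symm.trans h1
    · exact Conn.refl (Or.inr rfl)
  have hconn1 : ∀ x ∈ (K ∪ {q} : Set V), ∀ y ∈ (K ∪ {q} : Set V), Conn G (K ∪ {q}) x y :=
    fun x hx y hy => (haux1 x hx).trans (haux1 y hy).symm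
  have hclosed1 : ∀ x ∈ (K ∪ {q} : Set V), x ≠ q → ∀ y, G.Adj x y → y ∈ (K ∪ {q} : Set V) := by
    rintro x (hxK | rfl) hxq y hady
    · rcases eq_or_ne y q with rfl | hyq
      · exact Or.inr rfl
      · exact Or.inl (hKcl x hxK y hyq hady)
    · exact absurd rfl hxq
  have hT1 : ((K ∪ {q})ᶜ ∪ {q} : Set V) = Kᶜ := by
    ext z
    by_cases hz : z = q
    · subst hz; simp [hvK]
    · simp [Set.mem_compl_iff, hz]
  have hauxc1 : ∀ x ∈ (Kᶜ : Set V), Conn G (Kᶜ : Set V) x q := by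
    intro x hx
    exact (conn_collapse hvK (fun k hk y _ hyv hady => hKcl k hk y hyv hady)
      (hconnG x q) hx).mono (fun z hz => hz.2)
  have hconn2 : ∀ x ∈ (Kᶜ : Set V), ∀ y ∈ (Kᶜ : Set V), Conn G (Kᶜ : Set V) x y :=
    fun x hx y hy => (hauxc1 x hx).trans (hauxc1 y hy).symm
  have hout1 : ∀ x ∈ ((K ∪ {q})ᶜ ∪ {q} : Set V), ∀ y ∈ ((K ∪ {q})ᶜ ∪ {q} : Set V),
      Conn G ((K ∪ {q})ᶜ ∪ {q} : Set V) x y := by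
    rw [hT1]; exact hconn2
  have hclosed2 : ∀ x ∈ (Kᶜ : Set V), x ≠ q → ∀ y, G.Adj x y → y ∈ (Kᶜ : Set V) := by
    intro x hx hxq y hady hyK
    exact hx (hKcl y hyK x hxq hady.symm)
  have hT2 : ((Kᶜ)ᶜ ∪ {q} : Set V) = K ∪ {q} := by rw [compl_compl]
  have hout2 : ∀ x ∈ ((Kᶜ)ᶜ ∪ {q} : Set V), ∀ y ∈ ((Kᶜ)ᶜ ∪ {q} : Set V),
      Conn G ((Kᶜ)ᶜ ∪ {q} : Set V) x y := by
    rw [hT2]; exact hconn1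
  obtain ⟨B₁, hB1sub, hB1, x1, hx1, y1, hy1, hxy1⟩ :=
    exists_leaf_block (G := G) (Fintype.card V) (K ∪ {q}) q (hcb _) (Or.inr rfl)
      ⟨a, Or.inl haK, ha⟩ hconn1 hclosed1 hout1
  obtain ⟨B₂, hB2sub, hB2, -, -, -, -, -⟩ :=
    exists_leaf_block (G := G) (Fintype.card V) (Kᶜ) q (hcb _) hvK
      ⟨b, hbK, hb⟩ hconn2 hclosed2 hout2
  refine ⟨B₁, B₂, ?_, hB1, hB2⟩
  intro heq
  have hsub : B₁ ⊆ {q} := by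
    intro z hz
    rcases hB1sub hz with hzK | hzq
    · exact absurd hzK (hB2sub (heq ▸ hz))
    · exact hzq
  exact hxy1 ((hsub hx1).trans (hsub hy1).symm)
end

section
/- For all integers n, r, k with k ≥ 2r+2 ≥ 8 and n sufficiently large: the hypergraph H(n,k,r) — with vertex set consisting of a set L of ⌊k/2⌋-1 vertices plus n-|L| other vertices, whose hyperedges are all r-sets containing at least r-1 vertices of L (plus, when k is odd, all r-sets consisting of two fixed vertices u_1, u_2 ∉ L and r-2 vertices of L) — is connected, contains no Berge path on k vertices, and has exactly C(⌊k/2⌋-1, r-1)·(n - ⌈k/2⌉) + C(⌈k/2⌉, r) hyperedges. -/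
open Finset

/-- The hypergraph `E` contains a Berge path on `k` vertices. -/
def HasBergePathOn {V : Type*} (E : Finset (Finset V)) (k : ℕ) : Prop :=
  ∃ (m : ℕ) (w : Fin (m + 1) → V) (e : Fin m → Finset V),
    m + 1 = k ∧ Function.Injective w ∧ Function.Injective e ∧
    ∀ i : Fin m, e i ∈ E ∧ w i.castSucc ∈ e i ∧ w i.succ ∈ e i

/-- The extremal hypergraph `H(n,k,r)`: with `L` the set of the first `⌊k/2⌋ - 1`
vertices of `Fin n`, its hyperedges are all `r`-sets containing at least `r-1`
vertices of `L`, plus, when `k` is odd, all `r`-sets consisting of the two fixed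
vertices `u₁ = ⌊k/2⌋ - 1`, `u₂ = ⌊k/2⌋` together with `r-2` vertices of `L`. -/
def Hnkr (n k r : ℕ) : Finset (Finset (Fin n)) :=
  (univ.powersetCard r).filter (fun e =>
    r - 1 ≤ (e.filter (fun x : Fin n => (x : ℕ) < k / 2 - 1)).card ∨
    (k % 2 = 1 ∧ (∃ x ∈ e, (x : ℕ) = k / 2 - 1) ∧ (∃ x ∈ e, (x : ℕ) = k / 2) ∧
      ∀ x ∈ e, (x : ℕ) ≤ k / 2))

/-!
Let `L` be the first `⌊k/2⌋ - 1` vertices and `M ⊇ L` the first `⌈k/2⌉`, so that `M \ L`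
is `{u₁}` or `{u₁, u₂}`. Every `r`-subset of `M` is an edge, and the remaining edges are the
`(r-1)`-subsets of `L` together with one vertex outside `M`; this gives the count. Vertex `0 ∈ L`
shares an edge with every other vertex, so the hypergraph is connected. Only the special edges
through `u₁, u₂` contain two vertices outside `L`, so along a Berge path two consecutive vertices
lie outside `L` at most once, and never when `k` is even. Hence a path has at most
`2 |L| + 1 + k % 2 = k - 1` vertices.
-/

theorem HConnected.of_forall_exists_mem {V : Type*} {E : Finset (Finset V)} (z : V)
    (h : ∀ v, v ≠ z → ∃ e ∈ E, v ∈ e ∧ z ∈ e) : HConnected E := by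
  rintro ⟨A, ⟨a, ha⟩, ⟨b, hb⟩, hE⟩
  have side : ∀ v, v ∈ A ↔ z ∈ A := by
    intro v
    rcases eq_or_ne v z with rfl | hv
    · rfl
    obtain ⟨e, he, hve, hze⟩ := h v hv
    rcases hE e he with h | h
    · exact iff_of_true (h hve) (h hze)
    · exact iff_of_false (h hve) (h hze)
  exact hb ((side b).2 ((side a).1 ha))

theorem Fin.card_filter_le_card_filter_not_add {m : ℕ} (p : Fin (m + 1) → Prop)
    [DecidablePred p] :
    #{i | p i} ≤ #{i | ¬ p i} + 1 + #{i : Fin m | p i.castSucc ∧ p i.succ} := by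
  have h_last : #{i | p i} ≤ #{i : Fin m | p i.castSucc} + 1 := by
    calc #{i | p i}
        ≤ #(insert (last m) (({i : Fin m | p i.castSucc} : Finset (Fin m)).map castSuccEmb)) := by
          refine card_le_card fun i hi => ?_
          induction i using Fin.lastCases with
          | last => exact mem_insert_self _ _
          | cast i => simpa using hi
      _ ≤ _ := by simp
  have h_split := card_filter_add_card_filter_not (s := {i : Fin m | p i.castSucc})
    (fun i => p i.succ)
  have h_shift : #{i : Fin m | p i.castSucc ∧ ¬ p i.succ} ≤ #{i | ¬ p i} :=
    card_le_card_of_injOn Fin.succ (fun i hi => by simp_all) (Fin.succ_injective _).injOn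
  simp only [filter_filter] at h_split
  omega

theorem Fin.card_filter_mem_pair_le_one {m : ℕ} {V : Type*} [DecidableEq V] {w : Fin (m + 1) → V}
    (hw : Function.Injective w) (a b : V) :
    #{i : Fin m | w i.castSucc ∈ ({a, b} : Finset V) ∧ w i.succ ∈ ({a, b} : Finset V)} ≤ 1 := by
  refine card_le_one.2 fun i hi j hj => ?_
  simp only [mem_filter, mem_univ, true_and, mem_insert, mem_singleton] at hi hj
  have hw_val : ∀ {x y : Fin (m + 1)}, w x = w y → (x : ℕ) = y := fun h => congrArg Fin.val (hw h)
  have hi' : w i.castSucc ≠ w i.succ := hw.ne Fin.castSucc_lt_succ.ne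
  have hj' : w j.castSucc ≠ w j.succ := hw.ne Fin.castSucc_lt_succ.ne
  apply Fin.ext
  rcases hi.1 with h1 | h1 <;> rcases hi.2 with h2 | h2 <;> rcases hj.1 with h3 | h3 <;>
    rcases hj.2 with h4 | h4 <;> grind

theorem Finset.card_image_insert_product {α : Type*} [DecidableEq α] {s t : Finset α}
    (hst : Disjoint s t) (j : ℕ) :
    #((powersetCard j s ×ˢ t).image fun p => insert p.2 p.1) = (#s).choose j * #t := by
  rw [card_image_of_injOn, card_product, card_powersetCard]
  rintro ⟨a, x⟩ hax ⟨b, y⟩ hby h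
  simp only [coe_product, Set.mem_prod, mem_coe, mem_powersetCard] at hax hby h
  have hxa : x ∉ a := fun hx => disjoint_left.1 hst (hax.1.1 hx) hax.2
  have hyb : y ∉ b := fun hy => disjoint_left.1 hst (hby.1.1 hy) hby.2
  have hxy : x = y := by
    have hx : x ∈ insert y b := h ▸ mem_insert_self x a
    exact (mem_insert.1 hx).resolve_right fun hx => disjoint_left.1 hst (hby.1.1 hx) hax.2
  subst hxy
  rw [Prod.mk.injEq, ← erase_insert hxa, ← erase_insert hyb, h]
  exact ⟨rfl, rfl⟩

def initialSegment (n m : ℕ) : Finset (Fin n) := {x | (x : ℕ) < m}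

@[simp]
theorem mem_initialSegment {n m : ℕ} {x : Fin n} : x ∈ initialSegment n m ↔ (x : ℕ) < m := by
  simp [initialSegment]

theorem card_initialSegment (n m : ℕ) : #(initialSegment n m) = min n m :=
  Fin.card_filter_val_lt

namespace Hnkr

variable {n k r : ℕ}

theorem insert_mem {t : Finset (Fin n)} {x : Fin n} (hr : 1 ≤ r)
    (htL : t ⊆ initialSegment n (k / 2 - 1)) (ht : #t = r - 1) (hx : x ∉ t) :
    insert x t ∈ Hnkr n k r := by
  simp only [Hnkr, mem_filter, mem_powersetCard_univ]
  refine ⟨by rw [card_insert_of_notMem hx]; omega, Or.inl ?_⟩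
  calc r - 1 = #t := ht.symm
    _ ≤ _ := card_le_card fun y hy => mem_filter.2 ⟨mem_insert_of_mem hy, by simpa using htL hy⟩

theorem odd_and_le_of_two_outside {e : Finset (Fin n)} (he : e ∈ Hnkr n k r) (hr : 2 ≤ r)
    {x y : Fin n} (hx : x ∈ e) (hy : y ∈ e) (hxy : x ≠ y)
    (hxL : k / 2 - 1 ≤ (x : ℕ)) (hyL : k / 2 - 1 ≤ (y : ℕ)) :
    k % 2 = 1 ∧ (x : ℕ) ≤ k / 2 ∧ (y : ℕ) ≤ k / 2 := by
  simp only [Hnkr, mem_filter, mem_powersetCard_univ] at he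
  obtain ⟨he, hL | ⟨hk, -, -, hle⟩⟩ := he
  · have hsub : e.filter (fun z : Fin n => (z : ℕ) < k / 2 - 1) ⊆ (e.erase x).erase y :=
      fun z hz => by
        simp only [mem_filter] at hz
        simp only [mem_erase]
        exact ⟨by rintro rfl; omega, by rintro rfl; omega, hz.1⟩
    have := card_le_card hsub
    rw [card_erase_of_mem (mem_erase.2 ⟨hxy.symm, hy⟩), card_erase_of_mem hx] at this
    omega
  · exact ⟨hk, hle x hx, hle y hy⟩

theorem mem_of_subset {e : Finset (Fin n)} (hM : e ⊆ initialSegment n ((k + 1) / 2))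
    (he : #e = r) : e ∈ Hnkr n k r := by
  simp only [Hnkr, mem_filter, mem_powersetCard_univ, he, true_and]
  refine (le_or_gt (r - 1) _).imp id fun hL => ?_
  have h_split := card_filter_add_card_filter_not (s := e) fun z : Fin n => (z : ℕ) < k / 2 - 1
  obtain ⟨x, hx, y, hy, hxy⟩ := one_lt_card.1
    (show 1 < #(e.filter fun z : Fin n => ¬ (z : ℕ) < k / 2 - 1) by omega)
  simp only [mem_filter] at hx hy
  have hxM := mem_initialSegment.1 (hM hx.1)
  have hyM := mem_initialSegment.1 (hM hy.1)
  have hxy' := Fin.val_ne_of_ne hxy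
  refine ⟨by omega, ?_, ?_, fun z hz => by have := mem_initialSegment.1 (hM hz); omega⟩
  · rcases hxy'.lt_or_gt with h | h
    exacts [⟨x, hx.1, by omega⟩, ⟨y, hy.1, by omega⟩]
  · rcases hxy'.lt_or_gt with h | h
    exacts [⟨y, hy.1, by omega⟩, ⟨x, hx.1, by omega⟩]

theorem exists_eq_insert_of_not_subset {e : Finset (Fin n)} (he : e ∈ Hnkr n k r)
    (hM : ¬ e ⊆ initialSegment n ((k + 1) / 2)) :
    ∃ t ∈ powersetCard (r - 1) (initialSegment n (k / 2 - 1)),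
      ∃ x ∉ initialSegment n ((k + 1) / 2), e = insert x t := by
  obtain ⟨x, hxe, hxM⟩ := not_subset.1 hM
  rw [mem_initialSegment, not_lt] at hxM
  simp only [Hnkr, mem_filter, mem_powersetCard_univ] at he
  obtain ⟨he, hL | ⟨hk, -, -, hle⟩⟩ := he
  swap
  · have := hle x hxe; omega
  set t := e.filter fun z : Fin n => (z : ℕ) < k / 2 - 1
  have hxt : x ∉ t := fun hx => by simp only [t, mem_filter] at hx; omega
  have ht : t = e.erase x := eq_of_subset_of_card_le
    (fun z hz => mem_erase.2 ⟨ne_of_mem_of_not_mem hz hxt, (mem_filter.1 hz).1⟩)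
    (by rw [card_erase_of_mem hxe]; omega)
  refine ⟨t, mem_powersetCard.2 ⟨fun z hz => ?_, ?_⟩, x, by simpa using hxM, ?_⟩
  · exact mem_initialSegment.2 (mem_filter.1 hz).2
  · rw [ht, card_erase_of_mem hxe, he]
  · rw [ht, insert_erase hxe]

theorem eq_powersetCard_union_image (hr : 1 ≤ r) :
    Hnkr n k r = powersetCard r (initialSegment n ((k + 1) / 2)) ∪
      (powersetCard (r - 1) (initialSegment n (k / 2 - 1)) ×ˢ
        (initialSegment n ((k + 1) / 2))ᶜ).image fun p => insert p.2 p.1 := by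
  ext e
  simp only [mem_union, mem_image, mem_product, mem_compl, Prod.exists]
  constructor
  · intro he
    by_cases hM : e ⊆ initialSegment n ((k + 1) / 2)
    · exact Or.inl (mem_powersetCard.2 ⟨hM, mem_powersetCard_univ.1 (mem_filter.1 he).1⟩)
    obtain ⟨t, ht, x, hx, rfl⟩ := exists_eq_insert_of_not_subset he hM
    exact Or.inr ⟨t, x, ⟨ht, hx⟩, rfl⟩
  · rintro (he | ⟨t, x, ⟨ht, hxM⟩, rfl⟩)
    · exact mem_of_subset (mem_powersetCard.1 he).1 (mem_powersetCard.1 he).2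
    · obtain ⟨htL, ht⟩ := mem_powersetCard.1 ht
      refine insert_mem hr htL ht fun hx => hxM ?_
      have := mem_initialSegment.1 (htL hx)
      exact mem_initialSegment.2 (by omega)

theorem card_eq (hr : 1 ≤ r) (hn : (k + 1) / 2 ≤ n) :
    #(Hnkr n k r) = (k / 2 - 1).choose (r - 1) * (n - (k + 1) / 2) + ((k + 1) / 2).choose r := by
  have hLM : initialSegment n (k / 2 - 1) ⊆ initialSegment n ((k + 1) / 2) :=
    fun x hx => by simp at hx ⊢; omega
  rw [eq_powersetCard_union_image hr, card_union_of_disjoint, card_powersetCard,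
    card_image_insert_product (disjoint_compl_right.mono_left hLM), card_compl,
    card_initialSegment, card_initialSegment, Fintype.card_fin,
    min_eq_right hn, min_eq_right (by omega : k / 2 - 1 ≤ n), add_comm]
  refine disjoint_left.2 fun e heM he => ?_
  obtain ⟨⟨t, x⟩, hp, rfl⟩ := mem_image.1 he
  exact (mem_compl.1 (mem_product.1 hp).2) ((mem_powersetCard.1 heM).1 (mem_insert_self x t))

theorem hConnected (hr : 2 ≤ r) (hrk : r + 1 ≤ k / 2) (hn : k / 2 - 1 ≤ n) :
    HConnected (Hnkr n k r) := by
  set L := initialSegment n (k / 2 - 1)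
  have hL : #L = k / 2 - 1 := by rw [card_initialSegment, min_eq_right hn]
  let z : Fin n := ⟨0, by omega⟩
  refine HConnected.of_forall_exists_mem z fun v hv => ?_
  have hzL : {z} ⊆ L.erase v := by simp [L, hv.symm, z]; omega
  obtain ⟨t, hzt, htL, ht⟩ := exists_subsuperset_card_eq hzL (by simp; omega)
    (show r - 1 ≤ #(L.erase v) by have := pred_card_le_card_erase (s := L) (a := v); omega)
  exact ⟨insert v t, insert_mem (by omega) (htL.trans (erase_subset v L)) ht
    (fun hvt => by simpa using htL hvt), mem_insert_self v t,
    mem_insert_of_mem (singleton_subset_iff.1 hzt)⟩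

theorem not_hasBergePathOn (hr : 2 ≤ r) (hk : 2 ≤ k) : ¬ HasBergePathOn (Hnkr n k r) k := by
  rintro ⟨m, w, e, hmk, hw, -, he⟩
  have hn : m + 1 ≤ n := by simpa using Fintype.card_le_of_injective w hw
  let outside (i : Fin (m + 1)) : Prop := k / 2 - 1 ≤ (w i : ℕ)
  have h_inside : #{i | ¬ outside i} ≤ k / 2 - 1 :=
    calc #{i | ¬ outside i} ≤ #(initialSegment n (k / 2 - 1)) :=
          card_le_card_of_injOn w
            (fun i hi => mem_initialSegment.2 (by simp [outside] at hi; omega)) hw.injOn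
      _ ≤ k / 2 - 1 := by rw [card_initialSegment]; exact min_le_right _ _
  have h_pairs : #{i : Fin m | outside i.castSucc ∧ outside i.succ} ≤ k % 2 := by
    have h_special (i : Fin m) (hi : outside i.castSucc ∧ outside i.succ) :=
      odd_and_le_of_two_outside (he i).1 hr (he i).2.1 (he i).2.2
        (hw.ne Fin.castSucc_lt_succ.ne) hi.1 hi.2
    rcases Nat.mod_two_eq_zero_or_one k with hk2 | hk2
    · rw [hk2, Nat.le_zero, card_eq_zero, filter_eq_empty_iff]
      exact fun i _ hi => by have := (h_special i hi).1; omega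
    · let u₁ : Fin n := ⟨k / 2 - 1, by omega⟩
      let u₂ : Fin n := ⟨k / 2, by omega⟩
      rw [hk2]
      refine (card_le_card fun i hi => ?_).trans (Fin.card_filter_mem_pair_le_one hw u₁ u₂)
      simp only [mem_filter, mem_univ, true_and] at hi ⊢
      have := h_special i hi
      simp only [outside, mem_insert, mem_singleton, Fin.ext_iff, u₁, u₂] at hi ⊢
      omega
  have h_total := card_filter_add_card_filter_not (s := univ) fun i => outside i
  rw [card_univ, Fintype.card_fin] at h_total
  have := Fin.card_filter_le_card_filter_not_add outside
  omega

end Hnkr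

/-- For `k ≥ 2r+2 ≥ 8` and `n` sufficiently large, the hypergraph `H(n,k,r)` is
connected, contains no Berge path on `k` vertices, and has exactly
`C(⌊k/2⌋-1, r-1)·(n - ⌈k/2⌉) + C(⌈k/2⌉, r)` hyperedges. -/
theorem Hnkr_extremal (r k : ℕ) (hk : k ≥ 2 * r + 2) (hr : r ≥ 3) :
    ∃ N : ℕ, ∀ n : ℕ, N ≤ n →
      HConnected (Hnkr n k r) ∧
      ¬ HasBergePathOn (Hnkr n k r) k ∧
      (Hnkr n k r).card =
        (k / 2 - 1).choose (r - 1) * (n - (k + 1) / 2) + ((k + 1) / 2).choose r :=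
  ⟨k, fun _ hn => ⟨Hnkr.hConnected (by omega) (by omega) (by omega),
    Hnkr.not_hasBergePathOn (by omega) (by omega), Hnkr.card_eq (by omega) (by omega)⟩⟩
end
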